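/- arXiv:2411.01486 — 5 statements merged into one kernel-verified Lean document; each statement's English description precedes it below -/
import Mathlib

section
/- Let G be a finite simple undirected graph and let k be a positive integer. For every enumeration e_1, …, e_m of the edges of G, the spanning subgraph H output by the greedy spanner algorithm (running on this enumeration with stretch parameter k) is a k-spanner of G, and the girth of H is at least k+2. -/
/-!
A cycle of `H ⊔ edge u v` either is a cycle of `H` or passes through `uv` exactly once, and then
the rest of it is an `H`-walk from `v` to `u`; so its length is at least
`min (girth H) (dist_H(u, v) + 1)`. The greedy algorithm adds `uv` only when `dist_H(u, v) > k`,
so girth at least `k + 2` is preserved at every step. Once an edge `uv` of `G` has been processed,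
`dist_H(u, v) ≤ k`, and distances only decrease afterwards; chaining these bounds along a
shortest path of `G` gives stretch `k`.
-/

/-- `H` is a `k`-spanner of `G`: a spanning subgraph with
`dist_H(u,v) ≤ k * dist_G(u,v)` for all pairs (using extended distances,
so the condition is vacuous for pairs disconnected in `G`). -/
def IsKSpanner {V : Type*} (G H : SimpleGraph V) (k : ℕ) : Prop :=
  H ≤ G ∧ ∀ u v : V, H.edist u v ≤ (k : ℕ∞) * G.edist u v

/-- `H` is a minimum `k`-spanner of `G`: a `k`-spanner with the fewest edges. -/
def IsMinKSpanner {V : Type*} (G H : SimpleGraph V) (k : ℕ) : Prop :=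
  IsKSpanner G H k ∧
    ∀ H' : SimpleGraph V, IsKSpanner G H' k → H.edgeSet.ncard ≤ H'.edgeSet.ncard

open scoped Classical in
/-- The greedy spanner algorithm with stretch `k`, run on a list of edges:
starting from the edgeless graph, an edge `(u,v)` is added iff the current
distance between `u` and `v` exceeds `k`. -/
noncomputable def greedySpanner {V : Type*} (k : ℕ) (l : List (Sym2 V)) : SimpleGraph V :=
  l.foldl (fun H e =>
    if (k : ℕ∞) < Sym2.lift ⟨fun u v => H.edist u v, fun _ _ => SimpleGraph.edist_comm⟩ e
    then H ⊔ SimpleGraph.fromEdgeSet {e} else H) ⊥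

namespace SimpleGraph

variable {V : Type*} {G H : SimpleGraph V} {a b u v : V}

lemma edist_le_length_of_forall_mem_edgeSet (w : G.Walk a b)
    (hw : ∀ e ∈ w.edges, e ∈ H.edgeSet) : H.edist a b ≤ w.length := by
  simpa using (w.transfer H hw).edist_le

lemma Walk.IsTrail.edist_add_edist_add_one_le {w : G.Walk a b} (hw : w.IsTrail)
    (huv : s(u, v) ∈ w.edges) (hH : ∀ e ∈ w.edges, e ≠ s(u, v) → e ∈ H.edgeSet) :
    H.edist a u + H.edist v b + 1 ≤ w.length ∨ H.edist a v + H.edist u b + 1 ≤ w.length := by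
  induction w with
  | nil => simp at huv
  | @cons a c b hac p ih =>
    rw [Walk.isTrail_cons] at hw
    rw [Walk.edges_cons, List.mem_cons] at huv
    simp only [Walk.edges_cons, List.mem_cons, forall_eq_or_imp] at hH
    rw [Walk.length_cons, Nat.cast_succ]
    rcases huv with huv | huv
    · have hp : H.edist c b ≤ p.length := edist_le_length_of_forall_mem_edgeSet p fun e he ↦
        hH.2 e he (by rintro rfl; exact hw.2 (huv ▸ he))
      rcases Sym2.eq_iff.mp huv with ⟨rfl, rfl⟩ | ⟨rfl, rfl⟩
      · left; simpa [add_comm] using hp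
      · right; simpa [add_comm] using hp
    · have hstep (x : V) : H.edist a x ≤ H.edist c x + 1 := by
        have hH_ac : H.Adj a c := hH.1 fun h ↦ hw.2 (h ▸ huv)
        calc H.edist a x ≤ H.edist a c + H.edist c x := H.edist_triangle
          _ = H.edist c x + 1 := by rw [edist_eq_one_iff_adj.mpr hH_ac, add_comm]
      rcases ih hw.1 huv hH.2 with h | h
      · left
        calc _ ≤ H.edist c u + 1 + H.edist v b + 1 := by grw [hstep u]
          _ = H.edist c u + H.edist v b + 1 + 1 := by ring
          _ ≤ p.length + 1 := by gcongr
      · right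
        calc _ ≤ H.edist c v + 1 + H.edist u b + 1 := by grw [hstep v]
          _ = H.edist c v + H.edist u b + 1 + 1 := by ring
          _ ≤ p.length + 1 := by gcongr

lemma Walk.IsTrail.edist_add_one_le {w : G.Walk a a} (hw : w.IsTrail)
    (huv : s(u, v) ∈ w.edges) (hH : ∀ e ∈ w.edges, e ≠ s(u, v) → e ∈ H.edgeSet) :
    H.edist u v + 1 ≤ w.length := by
  have htri : H.edist u v ≤ H.edist u a + H.edist a v := H.edist_triangle
  rcases hw.edist_add_edist_add_one_le huv hH with h | h
  · rw [edist_comm (u := u) (v := a), edist_comm (u := a) (v := v)] at htri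
    exact le_trans (by gcongr) h
  · rw [add_comm] at htri
    exact le_trans (by gcongr) h

lemma min_egirth_edist_add_one_le_egirth_sup_edge :
    min H.egirth (H.edist u v + 1) ≤ (H ⊔ edge u v).egirth := by
  rw [le_egirth]
  intro a w hw
  have hH : ∀ e ∈ w.edges, e ≠ s(u, v) → e ∈ H.edgeSet := fun e he hne ↦ by
    simpa [edgeSet_sup, hne] using w.edges_subset_edgeSet he
  by_cases huv : s(u, v) ∈ w.edges
  · exact min_le_of_right_le (hw.isTrail.edist_add_one_le huv hH)
  · refine min_le_of_left_le ?_
    have hw' : ∀ e ∈ w.edges, e ∈ H.edgeSet := fun e he ↦ hH e he (ne_of_mem_of_not_mem he huv)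
    simpa using egirth_le_length (hw.transfer hw')

lemma edist_le_mul_length_of_forall_adj {k : ℕ∞} (hG : ∀ u v, G.Adj u v → H.edist u v ≤ k)
    (p : G.Walk u v) : H.edist u v ≤ k * p.length := by
  induction p with
  | nil => simp
  | @cons a c b hac p ih =>
    calc H.edist a b ≤ H.edist a c + H.edist c b := H.edist_triangle
      _ ≤ k + k * p.length := add_le_add (hG a c hac) ih
      _ = k * (Walk.cons hac p).length := by rw [Walk.length_cons]; push_cast; ring

lemma edist_le_mul_edist_of_forall_adj {k : ℕ∞} (hk : k ≠ 0)
    (hG : ∀ u v, G.Adj u v → H.edist u v ≤ k) (u v : V) :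
    H.edist u v ≤ k * G.edist u v := by
  by_cases h : G.edist u v = ⊤
  · simp [h, ENat.mul_top hk]
  · obtain ⟨p, hp⟩ := exists_walk_of_edist_ne_top h
    rw [← hp]
    exact edist_le_mul_length_of_forall_adj hG p

end SimpleGraph

open SimpleGraph

section Greedy

variable {V : Type*} {k : ℕ}

noncomputable def greedyStep (k : ℕ) (H : SimpleGraph V) (e : Sym2 V) : SimpleGraph V :=
  if (k : ℕ∞) < Sym2.lift ⟨fun u v => H.edist u v, fun _ _ => edist_comm⟩ e
  then H ⊔ fromEdgeSet {e} else H

lemma greedySpanner_eq_foldl (l : List (Sym2 V)) :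
    greedySpanner k l = l.foldl (greedyStep k) ⊥ := rfl

lemma greedyStep_mk (H : SimpleGraph V) (u v : V) :
    greedyStep k H s(u, v) = if (k : ℕ∞) < H.edist u v then H ⊔ edge u v else H := rfl

lemma greedySpanner_append_singleton (l : List (Sym2 V)) (e : Sym2 V) :
    greedySpanner k (l ++ [e]) = greedyStep k (greedySpanner k l) e := by
  simp [greedySpanner_eq_foldl]

lemma le_greedyStep (H : SimpleGraph V) (e : Sym2 V) : H ≤ greedyStep k H e := by
  unfold greedyStep; split_ifs <;> simp

lemma greedyStep_le_sup (H : SimpleGraph V) (e : Sym2 V) :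
    greedyStep k H e ≤ H ⊔ fromEdgeSet {e} := by
  unfold greedyStep; split_ifs <;> simp

lemma edist_greedyStep_le (hk : 0 < k) (H : SimpleGraph V) (u v : V) :
    (greedyStep k H s(u, v)).edist u v ≤ k := by
  rw [greedyStep_mk]
  split_ifs with h
  · rcases eq_or_ne u v with rfl | huv
    · simp
    · have : (H ⊔ edge u v).Adj u v := Or.inr ((edge_adj ..).mpr ⟨Or.inl ⟨rfl, rfl⟩, huv⟩)
      rw [edist_eq_one_iff_adj.mpr this]
      exact_mod_cast hk
  · exact not_lt.mp h

lemma le_egirth_greedyStep {H : SimpleGraph V} (hH : k + 2 ≤ H.egirth) (e : Sym2 V) :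
    k + 2 ≤ (greedyStep k H e).egirth := by
  induction e using Sym2.ind with
  | _ u v =>
    rw [greedyStep_mk]
    split_ifs with h
    · refine le_trans (le_min hH ?_) min_egirth_edist_add_one_le_egirth_sup_edge
      rw [show (k + 2 : ℕ∞) = k + 1 + 1 by ring]
      gcongr
      exact Order.add_one_le_of_lt h
    · exact hH

lemma greedySpanner_le_fromEdgeSet (l : List (Sym2 V)) :
    greedySpanner k l ≤ fromEdgeSet {e | e ∈ l} := by
  induction l using List.reverseRecOn with
  | nil => exact bot_le
  | append_singleton l e ih =>
    rw [greedySpanner_append_singleton]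
    have hl : {f | f ∈ l} ⊆ {f | f ∈ l ++ [e]} := fun f hf ↦ List.mem_append_left _ hf
    have he : {e} ⊆ {f | f ∈ l ++ [e]} := by simp
    exact (greedyStep_le_sup _ e).trans
      (sup_le (ih.trans (fromEdgeSet_mono hl)) (fromEdgeSet_mono he))

lemma edist_greedySpanner_le (hk : 0 < k) {l : List (Sym2 V)} {u v : V} (h : s(u, v) ∈ l) :
    (greedySpanner k l).edist u v ≤ k := by
  induction l using List.reverseRecOn with
  | nil => simp at h
  | append_singleton l e ih =>
    rw [greedySpanner_append_singleton]
    rcases List.mem_append.mp h with h | h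
    · exact (edist_anti (le_greedyStep _ e)).trans (ih h)
    · rw [← List.mem_singleton.mp h]
      exact edist_greedyStep_le hk _ u v

lemma le_egirth_greedySpanner (l : List (Sym2 V)) : k + 2 ≤ (greedySpanner k l).egirth := by
  induction l using List.reverseRecOn with
  | nil => simp [greedySpanner]
  | append_singleton l e ih =>
    rw [greedySpanner_append_singleton]
    exact le_egirth_greedyStep ih e

end Greedy

theorem greedy_isSpanner_and_girth_general {V : Type*} (G : SimpleGraph V)
    (k : ℕ) (hk : 0 < k) (l : List (Sym2 V))
    (hmem : ∀ e : Sym2 V, e ∈ l ↔ e ∈ G.edgeSet) :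
    IsKSpanner G (greedySpanner k l) k ∧
      (k + 2 : ℕ∞) ≤ (greedySpanner k l).egirth := by
  have hsub : greedySpanner k l ≤ G := by
    simpa [hmem] using greedySpanner_le_fromEdgeSet (k := k) l
  have hadj (u v : V) (h : G.Adj u v) : (greedySpanner k l).edist u v ≤ k :=
    edist_greedySpanner_le hk ((hmem _).mpr h)
  exact ⟨⟨hsub, edist_le_mul_edist_of_forall_adj (by exact_mod_cast hk.ne') hadj⟩,
    le_egirth_greedySpanner l⟩

/-- for every enumeration of the edges of `G`, the output of the
greedy spanner algorithm is a `k`-spanner of `G` of girth at least `k+2`. -/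
theorem greedy_isSpanner_and_girth {V : Type*} [Fintype V] (G : SimpleGraph V)
    (k : ℕ) (hk : 0 < k) (l : List (Sym2 V)) (hnd : l.Nodup)
    (hmem : ∀ e : Sym2 V, e ∈ l ↔ e ∈ G.edgeSet) :
    IsKSpanner G (greedySpanner k l) k ∧
      (k + 2 : ℕ∞) ≤ (greedySpanner k l).egirth :=
  greedy_isSpanner_and_girth_general G k hk l hmem
end

section
/- There exists a constant C such that for all sufficiently large n and every integer k > (2/3)n + C, every simple graph G on n vertices has at least one minimum k-spanner whose girth is at least k+2 (i.e., (n,k) is a good pair). -/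
/-!
Take a minimum `k`-spanner `H₀` of `G`. If it is a forest we are done. Otherwise a spanning
forest `F` of `H₀` has fewer edges, so it is not a `k`-spanner: some edge `xy` of `G` has
`dist_F(x, y) > k`. Adding `xy` to `F` gives a graph of girth `dist_F(x, y) + 1 ≥ k + 2` with at
most `|E(H₀)|` edges. This graph is still a `k`-spanner because in an `n`-vertex graph containing a
cycle of length `ℓ`, any two connected vertices satisfy `2 dist(u, v) + ℓ ≤ 2n`: a shortest
`u`–`v` path meets the cycle in at most `ℓ / 2 + 1` of its vertices, and its remaining vertices
lie off the cycle.
-/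

open Finset

theorem Finset.card_le_add_one_of_forall_sub_le {s : Finset ℕ} {r : ℕ}
    (h : ∀ i ∈ s, ∀ j ∈ s, j - i ≤ r) : #s ≤ r + 1 := by
  rcases s.eq_empty_or_nonempty with rfl | hs
  · simp
  calc #s ≤ #(Icc (s.min' hs) (s.min' hs + r)) :=
        card_le_card fun j hj => mem_Icc.mpr
          ⟨s.min'_le j hj, by have := h _ (s.min'_mem hs) j hj; omega⟩
    _ = r + 1 := by simp; omega

namespace SimpleGraph

variable {V : Type*} {G : SimpleGraph V} {u v x y : V}

namespace Walk

theorem sub_le_dist_getVert {p : G.Walk u v} (hp : p.length = G.dist u v) {i j : ℕ}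
    (hij : i ≤ j) (hj : j ≤ p.length) : j - i ≤ G.dist (p.getVert i) (p.getVert j) := by
  have hr : G.Reachable (p.getVert i) (p.getVert j) :=
    (p.take i).reachable.symm.trans (p.take j).reachable
  obtain ⟨q, hq⟩ := hr.exists_walk_length_eq_dist
  have := G.dist_le (((p.take i).append q).append (p.drop j))
  simp only [length_append, take_length, drop_length] at this
  omega

theorem two_mul_dist_le_length (c : G.Walk u u) {a b : V} (ha : a ∈ c.support)
    (hb : b ∈ c.support) : 2 * G.dist a b ≤ c.length := by
  classical
  have hb' : b ∈ (c.rotate a ha).support := (c.mem_support_rotate_iff a ha).mpr hb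
  have hsplit := congrArg length ((c.rotate a ha).take_spec hb')
  have h₁ := G.dist_le ((c.rotate a ha).takeUntil b hb')
  have h₂ := G.dist_le ((c.rotate a ha).dropUntil b hb').reverse
  rw [length_append, length_rotate] at hsplit
  rw [length_reverse] at h₂
  omega

theorem IsCycle.card_support_tail_toFinset [DecidableEq V] {c : G.Walk u u} (hc : c.IsCycle) :
    #c.support.tail.toFinset = c.length := by
  rw [List.toFinset_card_of_nodup hc.support_nodup, List.length_tail, length_support,
    Nat.add_sub_cancel]

theorem edist_deleteEdges_le_length (p : G.Walk u v) {e : Sym2 V} (he : e ∉ p.edges) :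
    (G.deleteEdges {e}).edist u v ≤ p.length := by
  simpa using (p.toDeleteEdge e he).edist_le

theorem edist_deleteEdges_add_one_le_length_add_length {e : Sym2 V} (p : G.Walk x y)
    (q : G.Walk y x) (hp : e ∈ p.edges) (hq : e ∉ q.edges) :
    (G.deleteEdges {e}).edist x y + 1 ≤ (p.length + q.length : ℕ) := by
  have h₁ := q.reverse.edist_deleteEdges_le_length (by simpa using hq)
  have h₂ : 1 ≤ p.length := p.length_edges ▸ List.length_pos_of_mem hp
  rw [length_reverse] at h₁
  calc _ ≤ (q.length : ℕ∞) + 1 := by gcongr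
    _ ≤ (p.length + q.length : ℕ) := by norm_cast; omega

theorem IsTrail.edist_deleteEdges_add_one_le_length {c : G.Walk u u} (hc : c.IsTrail)
    (he : s(x, y) ∈ c.edges) : (G.deleteEdges {s(x, y)}).edist x y + 1 ≤ c.length := by
  classical
  have hx := c.fst_mem_support_of_mem_edges he
  set c' := c.rotate x hx
  have he' : s(x, y) ∈ c'.edges := (c.rotate_edges x hx).mem_iff.mpr he
  have hy : y ∈ c'.support := c'.snd_mem_support_of_mem_edges he'
  have hdisj := (hc.rotate hx).disjoint_edges_takeUntil_dropUntil hy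
  have hlen : (c'.takeUntil y hy).length + (c'.dropUntil y hy).length = c.length := by
    rw [← length_append, take_spec, length_rotate]
  rw [← hlen]
  rw [← c'.take_spec hy, edges_append, List.mem_append] at he'
  rcases he' with he' | he'
  · exact edist_deleteEdges_add_one_le_length_add_length _ _ he' (hdisj he')
  · have := edist_deleteEdges_add_one_le_length_add_length (c'.dropUntil y hy).reverse
      (c'.takeUntil y hy).reverse (by simpa using he') (by simpa using fun h => hdisj h he')
    simpa [edist_comm, add_comm] using this

theorem edist_le_mul_length {H : SimpleGraph V} {k : ℕ}
    (h : ∀ u v, G.Adj u v → H.edist u v ≤ k) (p : G.Walk u v) :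
    H.edist u v ≤ k * p.length := by
  induction p with
  | nil => simp
  | cons hadj p ih =>
    calc _ ≤ _ := H.edist_triangle
      _ ≤ k + k * p.length := add_le_add (h _ _ hadj) ih
      _ = k * (p.cons hadj).length := by rw [length_cons]; push_cast; ring

end Walk

theorem IsAcyclic.edist_add_one_le_egirth_sup_edge {F : SimpleGraph V} (hF : F.IsAcyclic) :
    F.edist x y + 1 ≤ (F ⊔ edge x y).egirth := by
  have hle : (F ⊔ edge x y).deleteEdges {s(x, y)} ≤ F := by
    simp [deleteEdges_sup]
  rw [le_egirth]
  intro a c hc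
  by_cases he : s(x, y) ∈ c.edges
  · exact (add_le_add_left (edist_anti hle) 1).trans
      (hc.isTrail.edist_deleteEdges_add_one_le_length he)
  · exact (hF _ ((Walk.IsCycle.toDeleteEdges _ {s(x, y)} hc
      fun _ h h' => he (Set.mem_singleton_iff.mp h' ▸ h)).mapLe hle)).elim

theorem two_mul_dist_add_two_mul_card_le [Fintype V] {T : Finset V} {m : ℕ}
    (hT : ∀ a ∈ T, ∀ b ∈ T, 2 * G.dist a b ≤ m) (huv : G.Reachable u v) :
    2 * G.dist u v + 2 * #T ≤ 2 * Fintype.card V + m := by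
  classical
  obtain ⟨p, hp⟩ := huv.exists_walk_length_eq_dist
  have hgap {i j : ℕ} (hij : i ≤ j) (hj : j ≤ p.length) :=
    p.sub_le_dist_getVert hp hij hj
  set I := (range (p.length + 1)).filter (p.getVert · ∈ T)
  set J := (range (p.length + 1)).filter (p.getVert · ∉ T)
  have hIJ : #I + #J = p.length + 1 := by
    rw [card_filter_add_card_filter_not, card_range]
  have hI : #I ≤ m / 2 + 1 := by
    refine card_le_add_one_of_forall_sub_le fun i hi j hj => ?_
    simp only [I, mem_filter, mem_range] at hi hj
    rcases le_total i j with hij | hji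
    · have := hgap hij (by omega)
      have := hT _ hi.2 _ hj.2
      omega
    · omega
  have hJ : #J + #T ≤ Fintype.card V := by
    have hinj : Set.InjOn p.getVert J := by
      intro i hi j hj hij
      simp only [J, coe_filter, mem_range, Set.mem_ofPred_eq] at hi hj
      rcases le_total i j with h | h <;>
        have := hgap h (by omega) <;> rw [hij, dist_self] at this <;> omega
    have hdisj : Disjoint (J.image p.getVert) T := by
      refine Finset.disjoint_left.mpr fun _ ha => ?_
      obtain ⟨i, hi, rfl⟩ := mem_image.mp ha
      exact (mem_filter.mp hi).2
    rw [← card_image_of_injOn hinj, ← card_union_of_disjoint hdisj]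
    exact card_le_univ _
  omega

theorem Walk.IsCycle.two_mul_dist_add_length_le [Fintype V] {c : G.Walk x x} (hc : c.IsCycle)
    (huv : G.Reachable u v) : 2 * G.dist u v + c.length ≤ 2 * Fintype.card V := by
  classical
  have := two_mul_dist_add_two_mul_card_le (T := c.support.tail.toFinset) (m := c.length)
    (fun a ha b hb => c.two_mul_dist_le_length (List.mem_of_mem_tail (List.mem_toFinset.mp ha))
      (List.mem_of_mem_tail (List.mem_toFinset.mp hb))) huv
  rw [hc.card_support_tail_toFinset] at this
  omega

theorem ncard_edgeSet_sup_edge [Finite V] {F : SimpleGraph V} (hxy : x ≠ y) (hF : ¬F.Adj x y) :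
    (F ⊔ edge x y).edgeSet.ncard = F.edgeSet.ncard + 1 := by
  rw [edgeSet_sup, edgeSet_edge_of_ne hxy, Set.union_singleton,
    Set.ncard_insert_of_notMem (by exact hF)]

end SimpleGraph

open SimpleGraph

variable {V : Type*} {G H : SimpleGraph V} {k : ℕ}

theorem IsKSpanner.reachable (hH : IsKSpanner G H k) {u v : V} (huv : G.Reachable u v) :
    H.Reachable u v := by
  rw [← edist_ne_top_iff_reachable] at huv ⊢
  exact ne_top_of_le_ne_top (WithTop.mul_ne_top (ENat.natCast_ne_top k) huv) (hH.2 u v)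

theorem isKSpanner_self (hk : k ≠ 0) : IsKSpanner G G k :=
  ⟨le_rfl, fun u v => le_mul_of_one_le_left' (by exact_mod_cast Nat.one_le_iff_ne_zero.mpr hk)⟩

theorem isKSpanner_of_adj (hHG : H ≤ G) (hk : k ≠ 0) (h : ∀ u v, G.Adj u v → H.edist u v ≤ k) :
    IsKSpanner G H k := by
  refine ⟨hHG, fun u v => ?_⟩
  by_cases huv : G.Reachable u v
  · obtain ⟨p, hp⟩ := huv.exists_walk_length_eq_edist
    exact hp ▸ p.edist_le_mul_length h
  · simp [edist_eq_top_of_not_reachable huv, hk]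

theorem exists_isMinKSpanner (G : SimpleGraph V) (hk : k ≠ 0) : ∃ H, IsMinKSpanner G H k := by
  have hne : {H | IsKSpanner G H k}.Nonempty := ⟨G, isKSpanner_self hk⟩
  exact ⟨Function.argminOn (fun H => H.edgeSet.ncard) _ hne, Function.argminOn_mem _ _ hne,
    fun H' hH' => Function.argminOn_le (fun H => H.edgeSet.ncard) {H | IsKSpanner G H k} hH'⟩

theorem isKSpanner_of_isCycle [Fintype V] (hHG : H ≤ G) (hk : k ≠ 0)
    (hreach : ∀ u v, G.Reachable u v → H.Reachable u v) {a : V} {c : H.Walk a a}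
    (hc : c.IsCycle) (hn : 2 * Fintype.card V ≤ 2 * k + c.length) : IsKSpanner G H k := by
  refine isKSpanner_of_adj hHG hk fun u v huv => ?_
  have hr := hreach u v huv.reachable
  have := hc.two_mul_dist_add_length_le hr
  rw [← hr.coe_dist_eq_edist]
  exact_mod_cast (by omega : H.dist u v ≤ k)

theorem exists_isMinKSpanner_add_two_le_egirth [Fintype V] (G : SimpleGraph V) (hk : k ≠ 0)
    (hn : 2 * Fintype.card V ≤ 3 * k + 2) :
    ∃ H, IsMinKSpanner G H k ∧ (k + 2 : ℕ∞) ≤ H.egirth := by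
  obtain ⟨H₀, hH₀⟩ := exists_isMinKSpanner G hk
  by_cases hH₀ac : H₀.IsAcyclic
  · exact ⟨H₀, hH₀, by simp [egirth_eq_top.mpr hH₀ac]⟩
  obtain ⟨F, hFH₀, hF, hFreach⟩ := H₀.exists_isAcyclic_reachable_eq_le
  have hFlt : F.edgeSet.ncard < H₀.edgeSet.ncard :=
    Set.ncard_lt_ncard (edgeSet_strict_mono (hFH₀.lt_of_ne (by rintro rfl; exact hH₀ac hF)))
  have hreach : ∀ u v, G.Reachable u v → F.Reachable u v :=
    fun u v huv => hFreach ▸ hH₀.1.reachable huv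
  obtain ⟨x, y, hxy, hkxy⟩ : ∃ x y, G.Adj x y ∧ k < F.edist x y := by
    by_contra! h
    exact hFlt.not_ge (hH₀.2 F (isKSpanner_of_adj (hFH₀.trans hH₀.1.1) hk h))
  have hFxy : ¬F.Adj x y := fun h => by
    rw [edist_eq_one_iff_adj.mpr h, Order.lt_one_iff] at hkxy
    exact hk (by exact_mod_cast hkxy)
  have hgirth : (k + 2 : ℕ∞) ≤ (F ⊔ edge x y).egirth := by
    refine le_trans ?_ hF.edist_add_one_le_egirth_sup_edge
    rw [show (k + 2 : ℕ∞) = k + 1 + 1 by ring]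
    gcongr
    exact Order.add_one_le_of_lt hkxy
  obtain ⟨a, c, hc⟩ : ∃ a, ∃ c : (F ⊔ edge x y).Walk a a, c.IsCycle := by
    have : ¬(F ⊔ edge x y).IsAcyclic := by
      rw [isAcyclic_sup_fromEdgeSet_iff]
      exact fun h => (h.2 (hreach x y hxy.reachable)).elim hxy.ne hFxy
    simpa [IsAcyclic] using this
  have hlen : k + 2 ≤ c.length := by exact_mod_cast hgirth.trans (egirth_le_length hc)
  have hS : IsKSpanner G (F ⊔ edge x y) k :=
    isKSpanner_of_isCycle (sup_le (hFH₀.trans hH₀.1.1) ((edge_le_iff G).mpr (.inr hxy))) hk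
      (fun u v huv => (hreach u v huv).mono le_sup_left) hc (by omega)
  refine ⟨F ⊔ edge x y, ⟨hS, fun H' hH' => ?_⟩, hgirth⟩
  rw [ncard_edgeSet_sup_edge hxy.ne hFxy]
  exact hFlt.trans_le (hH₀.2 H' hH')

/-- there is a constant `C` such that for all sufficiently large `n`
and every `k > (2/3)n + C`, every `n`-vertex graph has a minimum `k`-spanner of
girth at least `k+2` (i.e. `(n,k)` is a good pair). -/
theorem good_pair_upperBound :
    ∃ C N : ℕ, ∀ n : ℕ, N ≤ n → ∀ k : ℕ, 2 * n + 3 * C < 3 * k →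
      ∀ G : SimpleGraph (Fin n), ∃ H : SimpleGraph (Fin n),
        IsMinKSpanner G H k ∧ (k + 2 : ℕ∞) ≤ H.egirth :=
  ⟨0, 0, fun n _ k hk G => exists_isMinKSpanner_add_two_le_egirth G (by omega)
    (by rw [Fintype.card_fin]; omega)⟩
end

section
/- There exists a constant C such that for all sufficiently large n and every integer k > (4/7)n + C, every connected simple graph G on n vertices has a k-spanner H of girth at least k+2 satisfying |E_H| − n ≤ 2(OPT − n) + 1, where OPT denotes the number of edges in a minimum k-spanner of G (i.e., (n,k) is a (2,O(1))-approx good pair). -/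
/-!
If some `k`-spanner has fewer than `n` edges, it is a spanning tree, hence acyclic, while every
spanner is connected and so has at least `n - 1` edges. Otherwise `OPT ≥ n`, and it suffices to
find a spanner of girth at least `k + 2` with at most `n + 1` edges. The greedy spanner (keep an
edge of `G` only if its endpoints are at distance more than `k` in the graph built so far) has
girth at least `k + 2`. If a connected graph has `n + 2` edges, the fundamental cycles
`Z₁, Z₂, Z₃` of three non-tree edges span seven nonzero elements of the cycle space. Each is a
nonempty even edge set, hence contains a cycle and has at least `girth` edges, and every edge of
`Z₁ ∪ Z₂ ∪ Z₃` lies in exactly four of them, so `7 * girth ≤ 4 * (n + 2)`. This is incompatible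
with `girth ≥ k + 2` once `7 * k > 4 * n`.
-/

open Finset SimpleGraph
open scoped symmDiff

lemma Finset.card_add_card_symmDiff_eq_four_mul_card_union {α : Type*} [DecidableEq α]
    (A B C : Finset α) :
    #A + #B + #C + #(A ∆ B) + #(A ∆ C) + #(B ∆ C) + #(A ∆ B ∆ C) = 4 * #(A ∪ B ∪ C) := by
  set U := A ∪ B ∪ C
  have hcard : ∀ X ⊆ U, #X = ∑ x ∈ U, if x ∈ X then 1 else 0 := fun X hX => by
    rw [sum_boole, filter_mem_eq_inter, inter_eq_right.mpr hX, Nat.cast_id]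
  have hA : A ⊆ U := subset_union_left.trans subset_union_left
  have hB : B ⊆ U := subset_union_right.trans subset_union_left
  have hC : C ⊆ U := subset_union_right
  have hsymm : ∀ {X Y}, X ⊆ U → Y ⊆ U → X ∆ Y ⊆ U := fun hX hY =>
    symmDiff_le_sup.trans (union_subset hX hY)
  rw [hcard A hA, hcard B hB, hcard C hC, hcard _ (hsymm hA hB), hcard _ (hsymm hA hC),
    hcard _ (hsymm hB hC), hcard _ (hsymm (hsymm hA hB) hC), mul_comm, ← smul_eq_mul,
    ← sum_const]
  simp only [← sum_add_distrib]
  refine sum_congr rfl fun x hx => ?_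
  simp only [U, mem_union] at hx
  by_cases hxA : x ∈ A <;> by_cases hxB : x ∈ B <;> by_cases hxC : x ∈ C <;>
    simp_all [mem_symmDiff]

namespace SimpleGraph

variable {V : Type*} {G : SimpleGraph V}

lemma Walk.IsTrail.exists_walk_notMem_edges_length_lt [DecidableEq V] {a u v : V}
    {c : G.Walk a a} (hc : c.IsTrail) (he : s(u, v) ∈ c.edges) :
    ∃ p : G.Walk u v, s(u, v) ∉ p.edges ∧ p.length < c.length := by
  have hu := c.fst_mem_support_of_mem_edges he
  have hrot := c.rotate_edges u hu
  set d := c.rotate u hu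
  have hd : d.IsTrail := hc.rotate hu
  have hed : s(u, v) ∈ d.edges := hrot.mem_iff.mpr he
  have hv : v ∈ d.support := d.snd_mem_support_of_mem_edges hed
  -- split the rotated trail at `v`: one half contains `s(u, v)`, the other half avoids it
  have hsplit := d.take_spec hv
  set p := d.takeUntil v hv
  set q := d.dropUntil v hv
  have hnodup : (p.edges ++ q.edges).Nodup := by
    rw [← Walk.edges_append, hsplit]; exact hd.edges_nodup
  have hlen : p.length + q.length = c.length := by
    rw [← Walk.length_append, hsplit, ← Walk.length_edges, ← Walk.length_edges,
      hrot.perm.length_eq]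
  rw [← hsplit, Walk.edges_append, List.mem_append] at hed
  rcases hed with hp | hq
  · have := List.length_pos_of_mem hp
    refine ⟨q.reverse, ?_, ?_⟩
    · simpa using List.disjoint_of_nodup_append hnodup hp
    · rw [Walk.length_edges] at this; rw [Walk.length_reverse]; omega
  · have := List.length_pos_of_mem hq
    refine ⟨p, fun hp => List.disjoint_of_nodup_append hnodup hp hq, ?_⟩
    rw [Walk.length_edges] at this; omega

lemma min_egirth_edist_le_egirth_sup_edge (u v : V) :
    min G.egirth (G.edist u v + 1) ≤ (G ⊔ edge u v).egirth := by
  classical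
  have hmemG : ∀ e ∈ (G ⊔ edge u v).edgeSet, e ≠ s(u, v) → e ∈ G.edgeSet := fun e he hne => by
    simpa [hne] using he
  rw [le_egirth]
  intro a c hc
  by_cases he : s(u, v) ∈ c.edges
  · obtain ⟨p, hpe, hpc⟩ := hc.isTrail.exists_walk_notMem_edges_length_lt he
    have hpG : ∀ e ∈ p.edges, e ∈ G.edgeSet := fun e hep =>
      hmemG e (p.edges_subset_edgeSet hep) (ne_of_mem_of_not_mem hep hpe)
    calc min G.egirth (G.edist u v + 1) ≤ G.edist u v + 1 := min_le_right _ _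
      _ ≤ (p.transfer G hpG).length + 1 := by gcongr; exact edist_le _
      _ ≤ c.length := by rw [Walk.length_transfer]; exact_mod_cast hpc
  · have hcG : ∀ e ∈ c.edges, e ∈ G.edgeSet := fun e hec =>
      hmemG e (c.edges_subset_edgeSet hec) (ne_of_mem_of_not_mem hec he)
    calc min G.egirth (G.edist u v + 1) ≤ G.egirth := min_le_left _ _
      _ ≤ (c.transfer G hcG).length := egirth_le_length (hc.transfer hcG)
      _ = c.length := by rw [Walk.length_transfer]

lemma Connected.isTree_of_ncard_lt [Finite V] (hG : G.Connected)
    (h : G.edgeSet.ncard < Nat.card V) : G.IsTree := by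
  have := hG.card_vert_le_card_edgeSet_add_one
  rw [Nat.card_coe_set_eq] at this
  exact isTree_iff_connected_and_card.mpr ⟨hG, by rw [Nat.card_coe_set_eq]; omega⟩

section EvenEdgeSet

variable [DecidableEq V]

/-- Within a graph, the even edge sets are the elements of its cycle space over `ZMod 2`. -/
def IsEvenEdgeSet (Z : Finset (Sym2 V)) : Prop := ∀ v : V, Even #{e ∈ Z | v ∈ e}

lemma IsEvenEdgeSet.symmDiff {A B : Finset (Sym2 V)} (hA : IsEvenEdgeSet A)
    (hB : IsEvenEdgeSet B) : IsEvenEdgeSet (A ∆ B) := by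
  intro v
  set A' := {e ∈ A | v ∈ e}
  set B' := {e ∈ B | v ∈ e}
  have hfilter : {e ∈ A ∆ B | v ∈ e} = (A' ∪ B') \ (A' ∩ B') := by
    ext e; simp only [mem_filter, mem_symmDiff, mem_sdiff, mem_union, mem_inter, A', B']; tauto
  have hcard := card_union_add_card_inter A' B'
  have hsub := card_le_card (inter_subset_union (s := A') (t := B'))
  rw [hfilter, card_sdiff_of_subset inter_subset_union]
  have hAv : Even #A' := hA v
  have hBv : Even #B' := hB v
  rw [Nat.even_iff] at *
  omega

lemma Walk.IsTrail.isEvenEdgeSet_edgesFinset {u : V} {c : G.Walk u u} (hc : c.IsTrail) :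
    IsEvenEdgeSet hc.edgesFinset := by
  intro v
  have := (hc.even_countP_edges_iff v).mpr (fun h => absurd rfl h)
  rwa [← Multiset.coe_countP, Multiset.countP_eq_card_filter] at this

lemma not_isAcyclic_fromEdgeSet_of_isEvenEdgeSet {Z : Finset (Sym2 V)} (hZ : IsEvenEdgeSet Z)
    (hdiag : ∀ e ∈ Z, ¬ e.IsDiag) (hne : Z.Nonempty) :
    ¬ (fromEdgeSet (Z : Set (Sym2 V))).IsAcyclic := by
  set K := fromEdgeSet (Z : Set (Sym2 V))
  have hK : ∀ {x y}, K.Adj x y ↔ s(x, y) ∈ Z := fun {x y} => by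
    simp only [K, fromEdgeSet_adj, mem_coe, and_iff_left_iff_imp]
    exact fun h hxy => hdiag _ h (Sym2.mk_isDiag_iff.mpr hxy)
  obtain ⟨e₀, he₀⟩ := hne
  induction e₀ using Sym2.ind with | _ x y => ?_
  have hxy : K.Adj x y := hK.mpr he₀
  have : Nonempty V := ⟨x⟩
  -- by evenness a longest path has a second edge at its start, which must close a cycle
  obtain ⟨u, v, p, hp, hlongest⟩ := Walk.exists_isPath_forall_isPath_length_le_length K
  have hnil : ¬ p.Nil := by
    have := hlongest _ _ _ (Path.singleton hxy).2
    rw [← Walk.length_eq_zero_iff]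
    simp [Path.singleton] at this
    omega
  have hsnd : s(u, p.snd) ∈ {e ∈ Z | u ∈ e} := by simp [hK.mp (p.adj_snd hnil)]
  obtain ⟨e, he, hne⟩ : ∃ e ∈ {e ∈ Z | u ∈ e}, e ≠ s(u, p.snd) := by
    refine exists_mem_ne ?_ _
    obtain ⟨m, hm⟩ := hZ u
    have := card_pos.mpr ⟨_, hsnd⟩
    omega
  rw [mem_filter] at he
  obtain ⟨w, rfl⟩ := Sym2.mem_iff_exists.mp he.2
  have huw : K.Adj u w := hK.mpr he.1
  have hw : w ∈ p.support := by
    by_contra hw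
    have := hlongest _ _ _ (hp.cons (p := p) (h := huw.symm) hw)
    simp at this
  intro hacyc
  exact hne (by rw [hacyc.eq_snd_of_adj_start hp huw hw])

lemma egirth_le_card_of_isEvenEdgeSet {Z : Finset (Sym2 V)} (hZ : IsEvenEdgeSet Z)
    (hne : Z.Nonempty) (hZG : (Z : Set (Sym2 V)) ⊆ G.edgeSet) : G.egirth ≤ #Z := by
  have hdiag : ∀ e ∈ Z, ¬ e.IsDiag := fun e he => G.not_isDiag_of_mem_edgeSet (hZG he)
  obtain ⟨a, c, hc, hlen⟩ :=
    exists_egirth_eq_length.mpr (not_isAcyclic_fromEdgeSet_of_isEvenEdgeSet hZ hdiag hne)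
  have hKG : fromEdgeSet (Z : Set (Sym2 V)) ≤ G := by
    intro x y hxy
    rw [fromEdgeSet_adj] at hxy
    exact hZG hxy.1
  have hcZ : hc.isTrail.edgesFinset ⊆ Z := fun e he => by
    have := c.edges_subset_edgeSet (e := e) he
    rw [edgeSet_fromEdgeSet] at this
    exact this.1
  calc G.egirth ≤ (fromEdgeSet (Z : Set (Sym2 V))).egirth := egirth_anti hKG
    _ = #hc.isTrail.edgesFinset := by rw [hlen, ← Walk.length_edges]; rfl
    _ ≤ #Z := by exact_mod_cast card_le_card hcZ

lemma seven_mul_egirth_le_card_union {A B C : Finset (Sym2 V)} (hA : IsEvenEdgeSet A)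
    (hB : IsEvenEdgeSet B) (hC : IsEvenEdgeSet C)
    (hABC : ((A ∪ B ∪ C : Finset (Sym2 V)) : Set (Sym2 V)) ⊆ G.edgeSet)
    {a b c : Sym2 V} (ha : a ∈ A) (haB : a ∉ B) (haC : a ∉ C) (hb : b ∈ B) (hbC : b ∉ C)
    (hc : c ∈ C) : 7 * G.egirth ≤ 4 * #(A ∪ B ∪ C) := by
  have key : ∀ X, X ⊆ A ∪ B ∪ C → IsEvenEdgeSet X → X.Nonempty → G.egirth ≤ #X :=
    fun X hX hXe hXne => egirth_le_card_of_isEvenEdgeSet hXe hXne ((coe_subset.mpr hX).trans hABC)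
  have hA' : A ⊆ A ∪ B ∪ C := subset_union_left.trans subset_union_left
  have hB' : B ⊆ A ∪ B ∪ C := subset_union_right.trans subset_union_left
  have hC' : C ⊆ A ∪ B ∪ C := subset_union_right
  have hsymm : ∀ {X Y}, X ⊆ A ∪ B ∪ C → Y ⊆ A ∪ B ∪ C → X ∆ Y ⊆ A ∪ B ∪ C := fun hX hY =>
    symmDiff_le_sup.trans (union_subset hX hY)
  calc 7 * G.egirth
      = G.egirth + G.egirth + G.egirth + G.egirth + G.egirth + G.egirth + G.egirth := by ring
    _ ≤ #A + #B + #C + #(A ∆ B) + #(A ∆ C) + #(B ∆ C) + #(A ∆ B ∆ C) := by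
      gcongr
      · exact key A hA' hA ⟨a, ha⟩
      · exact key B hB' hB ⟨b, hb⟩
      · exact key C hC' hC ⟨c, hc⟩
      · exact key _ (hsymm hA' hB') (hA.symmDiff hB) ⟨a, by simp [mem_symmDiff, ha, haB]⟩
      · exact key _ (hsymm hA' hC') (hA.symmDiff hC) ⟨a, by simp [mem_symmDiff, ha, haC]⟩
      · exact key _ (hsymm hB' hC') (hB.symmDiff hC) ⟨b, by simp [mem_symmDiff, hb, hbC]⟩
      · exact key _ (hsymm (hsymm hA' hB') hC') ((hA.symmDiff hB).symmDiff hC)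
          ⟨a, by simp [mem_symmDiff, ha, haB, haC]⟩
    _ = 4 * #(A ∪ B ∪ C) := by
      exact_mod_cast card_add_card_symmDiff_eq_four_mul_card_union A B C

lemma IsTree.exists_isEvenEdgeSet_insert {T : SimpleGraph V} (hT : T.IsTree) (hTG : T ≤ G)
    {e : Sym2 V} (heG : e ∈ G.edgeSet) (heT : e ∉ T.edgeSet) :
    ∃ Z : Finset (Sym2 V), IsEvenEdgeSet Z ∧ e ∈ Z ∧ (Z : Set (Sym2 V)) ⊆ insert e T.edgeSet := by
  induction e using Sym2.ind with | _ u v => ?_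
  have huv : G.Adj u v := heG
  obtain ⟨P, hP, -⟩ := hT.existsUnique_path v u
  have hc : (Walk.cons huv (P.mapLe hTG)).IsCycle := by
    rw [Walk.cons_isCycle_iff, Walk.edges_mapLe_eq_edges]
    exact ⟨hP.mapLe hTG, fun h => heT (P.edges_subset_edgeSet h)⟩
  refine ⟨hc.isTrail.edgesFinset, hc.isTrail.isEvenEdgeSet_edgesFinset, ?_, fun f hf => ?_⟩
  · exact List.mem_cons_self (l := (P.mapLe hTG).edges)
  · have hf : f ∈ (Walk.cons huv (P.mapLe hTG)).edges := hf
    rw [Walk.edges_cons, Walk.edges_mapLe_eq_edges, List.mem_cons] at hf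
    exact hf.imp_right fun h => P.edges_subset_edgeSet h

lemma Connected.seven_mul_egirth_le [Finite V] (hG : G.Connected)
    (hcard : Nat.card V + 2 ≤ G.edgeSet.ncard) : 7 * G.egirth ≤ 4 * (Nat.card V + 2 : ℕ) := by
  classical
  have := Fintype.ofFinite V
  obtain ⟨T, hTG, hT⟩ := hG.exists_isTree_le
  have hTcard := hT.card_edgeFinset
  have hsub : T.edgeFinset ⊆ G.edgeFinset := edgeFinset_mono hTG
  have : 2 < #(G.edgeFinset \ T.edgeFinset) := by
    have hGcard : G.edgeSet.ncard = #G.edgeFinset := Set.ncard_eq_toFinset_card' _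
    rw [card_sdiff_of_subset hsub]
    rw [Nat.card_eq_fintype_card] at hcard
    omega
  obtain ⟨e₁, he₁, e₂, he₂, e₃, he₃, h₁₂, h₁₃, h₂₃⟩ := two_lt_card.mp this
  simp only [mem_sdiff, mem_edgeFinset] at he₁ he₂ he₃
  obtain ⟨Z₁, hZ₁, he₁Z₁, hZ₁T⟩ := hT.exists_isEvenEdgeSet_insert hTG he₁.1 he₁.2
  obtain ⟨Z₂, hZ₂, he₂Z₂, hZ₂T⟩ := hT.exists_isEvenEdgeSet_insert hTG he₂.1 he₂.2
  obtain ⟨Z₃, hZ₃, he₃Z₃, hZ₃T⟩ := hT.exists_isEvenEdgeSet_insert hTG he₃.1 he₃.2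
  have hnotMem : ∀ {Z : Finset (Sym2 V)} {e f}, (Z : Set (Sym2 V)) ⊆ insert e T.edgeSet →
      f ∉ T.edgeSet → f ≠ e → f ∉ Z := fun hZ hfT hfe hfZ =>
    (Set.mem_insert_iff.mp (hZ hfZ)).elim hfe hfT
  set W := insert e₁ (insert e₂ (insert e₃ T.edgeFinset))
  have hUW : Z₁ ∪ Z₂ ∪ Z₃ ⊆ W := by
    intro f hf
    have h₁ := @hZ₁T f
    have h₂ := @hZ₂T f
    have h₃ := @hZ₃T f
    simp only [W, mem_union, mem_insert, mem_edgeFinset, mem_coe, Set.mem_insert_iff]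
      at hf h₁ h₂ h₃ ⊢
    rcases hf with (hf | hf) | hf
    · rcases h₁ hf with h | h <;> simp [h]
    · rcases h₂ hf with h | h <;> simp [h]
    · rcases h₃ hf with h | h <;> simp [h]
  have hWG : (W : Set (Sym2 V)) ⊆ G.edgeSet := by
    intro f hf
    simp only [W, coe_insert, coe_edgeFinset, Set.mem_insert_iff] at hf
    rcases hf with rfl | rfl | rfl | hf
    exacts [he₁.1, he₂.1, he₃.1, edgeSet_mono hTG hf]
  have hW : #W ≤ Nat.card V + 2 := by
    have := card_insert_le e₁ (insert e₂ (insert e₃ T.edgeFinset))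
    have := card_insert_le e₂ (insert e₃ T.edgeFinset)
    have := card_insert_le e₃ T.edgeFinset
    simp only [W, Nat.card_eq_fintype_card]
    omega
  calc 7 * G.egirth
      ≤ 4 * #(Z₁ ∪ Z₂ ∪ Z₃) :=
        seven_mul_egirth_le_card_union hZ₁ hZ₂ hZ₃ ((coe_subset.mpr hUW).trans hWG) he₁Z₁
          (hnotMem hZ₂T he₁.2 h₁₂) (hnotMem hZ₃T he₁.2 h₁₃) he₂Z₂ (hnotMem hZ₃T he₂.2 h₂₃) he₃Z₃
    _ ≤ 4 * (Nat.card V + 2 : ℕ) := by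
      gcongr
      exact_mod_cast (card_le_card hUW).trans hW

end EvenEdgeSet

section Spanner

variable {H : SimpleGraph V} {k : ℕ}

lemma Walk.edist_le_mul_length_s9 (hadj : ∀ u v, G.Adj u v → H.edist u v ≤ k) {u v : V}
    (p : G.Walk u v) : H.edist u v ≤ k * p.length := by
  induction p with
  | nil => simp
  | @cons x y z h q ih =>
    calc H.edist x z ≤ H.edist x y + H.edist y z := SimpleGraph.edist_triangle
      _ ≤ k + k * q.length := add_le_add (hadj _ _ h) ih
      _ = k * (q.cons h).length := by push_cast [Walk.length_cons]; ring

lemma isKSpanner_of_forall_adj (hk : k ≠ 0) (hHG : H ≤ G)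
    (hadj : ∀ u v, G.Adj u v → H.edist u v ≤ k) : IsKSpanner G H k := by
  refine ⟨hHG, fun u v => ?_⟩
  by_cases huv : G.Reachable u v
  · obtain ⟨p, hp⟩ := huv.exists_walk_length_eq_edist
    rw [← hp]
    exact p.edist_le_mul_length_s9 hadj
  · rw [edist_eq_top_of_not_reachable huv, ENat.mul_top (by exact_mod_cast hk)]
    exact le_top

protected lemma _root_.IsKSpanner.connected (hG : G.Connected) (hH : IsKSpanner G H k) :
    H.Connected := by
  refine (connected_iff _).mpr ⟨fun u v => reachable_of_edist_ne_top fun htop => ?_, hG.nonempty⟩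
  have := hH.2 u v
  rw [htop, top_le_iff] at this
  exact WithTop.mul_ne_top (ENat.natCast_ne_top k) (edist_ne_top_iff_reachable.mpr (hG u v)) this

variable (k) in
noncomputable def greedySpanner : List G.Dart → SimpleGraph V
  | [] => ⊥
  | d :: l =>
    if (greedySpanner l).edist d.fst d.snd ≤ k then greedySpanner l
    else greedySpanner l ⊔ edge d.fst d.snd

lemma greedySpanner_le (l : List G.Dart) : greedySpanner k l ≤ G := by
  induction l with
  | nil => exact bot_le
  | cons d l ih =>
    rw [greedySpanner]
    split_ifs
    · exact ih
    · exact sup_le ih ((edge_le_iff G).mpr (Or.inr d.adj))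

lemma greedySpanner_le_cons (d : G.Dart) (l : List G.Dart) :
    greedySpanner k l ≤ greedySpanner k (d :: l) := by
  rw [greedySpanner]
  split_ifs
  · exact le_rfl
  · exact le_sup_left

lemma edist_greedySpanner_le (hk : k ≠ 0) {l : List G.Dart} {d : G.Dart} (hd : d ∈ l) :
    (greedySpanner k l).edist d.fst d.snd ≤ k := by
  induction l with
  | nil => simp at hd
  | cons d' l ih =>
    rcases List.mem_cons.mp hd with rfl | hd
    · rw [greedySpanner]
      split_ifs with h
      · exact h
      · have hadj : (greedySpanner k l ⊔ edge d.fst d.snd).Adj d.fst d.snd :=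
          Or.inr (by simp [edge_adj, d.adj.ne])
        rw [edist_eq_one_iff_adj.mpr hadj]
        exact_mod_cast Nat.one_le_iff_ne_zero.mpr hk
    · exact (edist_anti (greedySpanner_le_cons d' l)).trans (ih hd)

lemma le_egirth_greedySpanner (l : List G.Dart) : (k + 2 : ℕ∞) ≤ (greedySpanner k l).egirth := by
  induction l with
  | nil => simp [greedySpanner]
  | cons d l ih =>
    rw [greedySpanner]
    split_ifs with h
    · exact ih
    · refine le_trans (le_min ih ?_) (min_egirth_edist_le_egirth_sup_edge _ _)
      have := Order.add_one_le_of_lt (not_le.mp h)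
      calc (k + 2 : ℕ∞) = k + 1 + 1 := by ring
        _ ≤ _ := by gcongr

theorem exists_isKSpanner_le_egirth [Finite V] (G : SimpleGraph V) (hk : k ≠ 0) :
    ∃ H, IsKSpanner G H k ∧ (k + 2 : ℕ∞) ≤ H.egirth := by
  classical
  have := Fintype.ofFinite V
  refine ⟨greedySpanner k (Finset.univ : Finset G.Dart).toList,
    isKSpanner_of_forall_adj hk (greedySpanner_le _) fun u v huv => ?_,
    le_egirth_greedySpanner _⟩
  exact edist_greedySpanner_le hk (d := ⟨(u, v), huv⟩) (by simp)

end Spanner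

end SimpleGraph

/-- there is a constant `C` such that for all sufficiently large `n`
and every `k > (4/7)n + C`, every connected `n`-vertex graph `G` has a
`k`-spanner `H` of girth at least `k+2` with `|E_H| - n ≤ 2(OPT - n) + 1`,
where `OPT` is the size of a minimum `k`-spanner of `G`
(i.e. `(n,k)` is `(2,O(1))`-approx good). -/
theorem approx_good_2 :
    ∃ C N : ℕ, ∀ n : ℕ, N ≤ n → ∀ k : ℕ, 4 * n + 7 * C < 7 * k →
      ∀ G : SimpleGraph (Fin n), G.Connected →
        ∃ H : SimpleGraph (Fin n), IsKSpanner G H k ∧ (k + 2 : ℕ∞) ≤ H.egirth ∧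
          ∀ Hopt : SimpleGraph (Fin n), IsMinKSpanner G Hopt k →
            (H.edgeSet.ncard : ℤ) - n ≤ 2 * ((Hopt.edgeSet.ncard : ℤ) - n) + 1 := by
  refine ⟨0, 0, fun n _ k hk G hG => ?_⟩
  have hV : Nat.card (Fin n) = n := Nat.card_fin n
  have hlower : ∀ H, IsKSpanner G H k → n ≤ H.edgeSet.ncard + 1 := fun H hH => by
    simpa [hV] using (hH.connected hG).card_vert_le_card_edgeSet_add_one
  by_cases htree : ∃ T, IsKSpanner G T k ∧ T.edgeSet.ncard < n
  · obtain ⟨T, hT, hTn⟩ := htree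
    have hTtree : T.IsTree := (hT.connected hG).isTree_of_ncard_lt (by rwa [hV])
    refine ⟨T, hT, by simp [hTtree.isAcyclic.egirth_eq_top], fun Hopt hopt => ?_⟩
    have := hlower Hopt hopt.1
    omega
  · push Not at htree
    obtain ⟨H, hH, hgirth⟩ := G.exists_isKSpanner_le_egirth (k := k) (by omega)
    refine ⟨H, hH, hgirth, fun Hopt hopt => ?_⟩
    have := htree Hopt hopt.1
    have hHn : H.edgeSet.ncard ≤ n + 1 := by
      by_contra! hlarge
      have h7 := (mul_le_mul_right hgirth 7).trans
        ((hH.connected hG).seven_mul_egirth_le (by rw [hV]; omega))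
      rw [hV] at h7
      have : 7 * (k + 2) ≤ 4 * (n + 2) := by exact_mod_cast h7
      omega
    omega
end

section
/- Let G be a simple graph on n vertices, k a positive integer, and H a k-spanner of G. Let C be a cycle of H whose length L equals the girth of H, and suppose 2(n − k) ≤ L ≤ k + 1. Then there exists an edge e of C such that the graph H with the edge e removed is still a k-spanner of G. -/
/-!
Let `W` be the vertex set of the cycle, `L = |W|`, and split the vertices that can reach `W` into
Voronoi cells around the sites of `W`, ties broken by the order on vertices. Shortest walks to a
site stay in its cell and avoid all other sites, so after deleting any cycle edge the vertices of
the cell of `w` are still within distance `r w = |cell w| - 1` of each other, and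
`∑ r ≤ n - L ≤ k`. Vertices that cannot reach `W` lie in components with at most `n - L` vertices.

For vertices in the cells of distinct sites `x, y`, route through `x`, along one of the two arcs
of the cycle between `x` and `y`, and through `y`. Using the arc of length `σ` costs
`r x + σ + r y`, which is at most `k` unless the other arc, of length `L - σ`, is heavy:
`L - σ + (k + 1 - L) ≤ r x + r y`. So it suffices to delete an edge lying on no heavy arc. If
heavy arcs covered the cycle, a cover of minimal size would have distinct initial and distinct
final points and at least two arcs, whence `L + 2 (k + 1 - L) ≤ 2 ∑ r ≤ 2 (n - L)`, contradicting
`2 (n - k) ≤ L`.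
-/

open Finset Function

theorem IsKSpanner.of_reachable {V : Type*} {G H H' : SimpleGraph V} {k : ℕ} (hk : k ≠ 0)
    (hH : IsKSpanner G H k) (hle : H' ≤ G)
    (h : ∀ a b, H.Reachable a b → H'.edist a b ≤ k) : IsKSpanner G H' k := by
  refine ⟨hle, fun a b => ?_⟩
  obtain rfl | hab := eq_or_ne a b
  · simp
  obtain hG | hG := eq_or_ne (G.edist a b) ⊤
  · rw [hG, ENat.mul_top (by exact_mod_cast hk)]
    exact le_top
  have hreach : H.Reachable a b := SimpleGraph.reachable_of_edist_ne_top <|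
    ne_top_of_le_ne_top (WithTop.mul_ne_top (ENat.natCast_ne_top k) hG) (hH.2 a b)
  calc H'.edist a b ≤ k := h a b hreach
    _ = k * 1 := (mul_one _).symm
    _ ≤ k * G.edist a b := by
      gcongr
      exact Order.one_le_iff_pos.2 (SimpleGraph.edist_pos_of_ne hab)

namespace SimpleGraph

variable {V : Type*}

theorem edist_le_card_sub_one {G : SimpleGraph V} {S : Finset V} {a b : V} (p : G.Walk a b)
    (hp : ∀ x ∈ p.support, x ∈ S) : G.edist a b ≤ (#S - 1 : ℕ) := by
  classical
  have hpath := p.bypass_isPath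
  have hcard : p.bypass.length + 1 ≤ #S := by
    rw [← p.bypass.length_support, ← List.toFinset_card_of_nodup hpath.support_nodup]
    exact card_le_card fun x hx => hp x (p.support_bypass_subset_support (List.mem_toFinset.1 hx))
  exact (edist_le _).trans (by exact_mod_cast (by omega : p.bypass.length ≤ #S - 1))

theorem edist_deleteEdges_le_card_sub_one {G : SimpleGraph V} {S : Finset V} {e : Sym2 V}
    {a b : V} (p : G.Walk a b) (hp : ∀ x ∈ p.support, x ∈ S) (he : e ∉ p.edges) :
    (G.deleteEdges {e}).edist a b ≤ (#S - 1 : ℕ) :=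
  edist_le_card_sub_one (p.toDeleteEdge e he) (by simpa [Walk.support_transfer] using hp)

theorem edist_deleteEdges_le_of_forall_not_reachable [Fintype V] {G : SimpleGraph V}
    {W : Finset V} {u u' a b : V} (hu : u ∈ W) (hab : G.Reachable a b)
    (ha : ∀ w ∈ W, ¬ G.Reachable a w) :
    (G.deleteEdges {s(u, u')}).edist a b ≤ (Fintype.card V - #W - 1 : ℕ) := by
  classical
  obtain ⟨p⟩ := hab
  have hout : ∀ z ∈ p.support, z ∈ univ \ W := fun z hz =>
    mem_sdiff.2 ⟨mem_univ z, fun hzW => ha z hzW ⟨p.takeUntil z hz⟩⟩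
  have he : s(u, u') ∉ p.edges := fun he =>
    (mem_sdiff.1 (hout u (p.fst_mem_support_of_mem_edges he))).2 hu
  simpa [card_sdiff_of_subset (subset_univ W)] using edist_deleteEdges_le_card_sub_one p hout he

section VoronoiCell

variable [Fintype V] [LinearOrder V] (H : SimpleGraph V) (W : Finset V)

/-- The lexicographic tie-break between equidistant sites makes the cells of distinct sites
disjoint. -/
noncomputable def voronoiCell (w : V) : Finset V :=
  open Classical in
  {x | H.Reachable x w ∧ ∀ w' ∈ W, toLex (H.edist x w, w) ≤ toLex (H.edist x w', w')}

variable {H W} {w x : V}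

theorem mem_voronoiCell : x ∈ H.voronoiCell W w ↔
    H.Reachable x w ∧ ∀ w' ∈ W, H.edist x w ≤ H.edist x w' ∧
      (H.edist x w = H.edist x w' → w ≤ w') := by
  simp [voronoiCell, Prod.Lex.toLex_le_toLex']

theorem self_mem_voronoiCell : w ∈ H.voronoiCell W w := by
  refine mem_voronoiCell.2 ⟨.refl w, fun w' _ => ⟨by simp, fun h => ?_⟩⟩
  rw [edist_self, eq_comm, edist_eq_zero_iff] at h
  exact h.le

theorem eq_of_mem_voronoiCell_of_mem (hx : x ∈ H.voronoiCell W w) (hxW : x ∈ W) : x = w := by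
  have := ((mem_voronoiCell.1 hx).2 x hxW).1
  rwa [edist_self, nonpos_iff_eq_zero, edist_eq_zero_iff] at this

theorem eq_of_mem_voronoiCell_of_mem_voronoiCell {w' : V} (hw : w ∈ W) (hw' : w' ∈ W)
    (hx : x ∈ H.voronoiCell W w) (hx' : x ∈ H.voronoiCell W w') : w = w' := by
  obtain ⟨h₁, h₂⟩ := (mem_voronoiCell.1 hx).2 w' hw'
  obtain ⟨h₁', h₂'⟩ := (mem_voronoiCell.1 hx').2 w hw
  exact le_antisymm (h₂ (le_antisymm h₁ h₁')) (h₂' (le_antisymm h₁' h₁))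

theorem exists_mem_voronoiCell {w₀ : V} (hw₀ : w₀ ∈ W) (hx : H.Reachable x w₀) :
    ∃ w ∈ W, x ∈ H.voronoiCell W w := by
  obtain ⟨w, hw, hmin⟩ := W.exists_min_image (fun w => toLex (H.edist x w, w)) ⟨w₀, hw₀⟩
  have hle : H.edist x w ≤ H.edist x w₀ := (Prod.Lex.toLex_le_toLex'.1 (hmin w₀ hw₀)).1
  refine ⟨w, hw, mem_voronoiCell.2 ⟨?_, fun w' hw' => Prod.Lex.toLex_le_toLex'.1 (hmin w' hw')⟩⟩
  exact reachable_of_edist_ne_top (ne_top_of_le_ne_top (edist_ne_top_iff_reachable.2 hx) hle)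

theorem mem_voronoiCell_of_mem_support {y : V} (hx : x ∈ H.voronoiCell W w) (p : H.Walk x w)
    (hp : p.length = H.edist x w) (hy : y ∈ p.support) : y ∈ H.voronoiCell W w := by
  have hxy : H.edist x y ≠ ⊤ := edist_ne_top_iff_reachable.2 ⟨p.takeUntil y hy⟩
  have hsplit : H.edist x w = H.edist x y + H.edist y w := by
    refine le_antisymm SimpleGraph.edist_triangle ?_
    rw [← hp, ← p.take_spec hy, Walk.length_append, Nat.cast_add]
    exact add_le_add (edist_le _) (edist_le _)
  refine mem_voronoiCell.2 ⟨⟨p.dropUntil y hy⟩, fun w' hw' => ?_⟩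
  obtain ⟨h₁, h₂⟩ := (mem_voronoiCell.1 hx).2 w' hw'
  have hx' : H.edist x w' ≤ H.edist x y + H.edist y w' := SimpleGraph.edist_triangle
  refine ⟨?_, fun h => h₂ (le_antisymm h₁ (hx'.trans (h ▸ hsplit.ge)))⟩
  by_contra! hlt
  exact (hx'.trans_lt ((ENat.add_lt_add_iff_left hxy).2 hlt)).not_ge (hsplit ▸ h₁)

theorem exists_walk_support_subset_voronoiCell (hx : x ∈ H.voronoiCell W w) :
    ∃ p : H.Walk x w, ∀ y ∈ p.support, y ∈ H.voronoiCell W w := by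
  obtain ⟨p, hp⟩ := (mem_voronoiCell.1 hx).1.exists_walk_length_eq_edist
  exact ⟨p, fun y hy => mem_voronoiCell_of_mem_support hx p hp hy⟩

theorem edist_deleteEdges_le_of_mem_voronoiCell {u u' y : V} (hu : u ∈ W) (hu' : u' ∈ W)
    (huu' : u ≠ u') (hx : x ∈ H.voronoiCell W w) (hy : y ∈ H.voronoiCell W w) :
    (H.deleteEdges {s(u, u')}).edist x y ≤ (#(H.voronoiCell W w) - 1 : ℕ) := by
  obtain ⟨p, hp⟩ := exists_walk_support_subset_voronoiCell hx
  obtain ⟨q, hq⟩ := exists_walk_support_subset_voronoiCell hy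
  have hpq : ∀ z ∈ (p.append q.reverse).support, z ∈ H.voronoiCell W w := by
    intro z hz
    rw [Walk.mem_support_append_iff, Walk.support_reverse, List.mem_reverse] at hz
    exact hz.elim (hp z) (hq z)
  refine edist_deleteEdges_le_card_sub_one _ hpq fun he => huu' ?_
  rw [eq_of_mem_voronoiCell_of_mem (hpq _ (Walk.fst_mem_support_of_mem_edges _ he)) hu,
    eq_of_mem_voronoiCell_of_mem (hpq _ (Walk.snd_mem_support_of_mem_edges _ he)) hu']

theorem sum_card_voronoiCell_sub_one_le :
    ∑ w ∈ W, (#(H.voronoiCell W w) - 1) ≤ Fintype.card V - #W := by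
  classical
  have hdisj : (W : Set V).PairwiseDisjoint fun w => (H.voronoiCell W w).erase w :=
    fun w hw w' hw' hne => Finset.disjoint_left.2 fun x hx hx' =>
      hne (eq_of_mem_voronoiCell_of_mem_voronoiCell hw hw' (mem_of_mem_erase hx)
        (mem_of_mem_erase hx'))
  calc ∑ w ∈ W, (#(H.voronoiCell W w) - 1) = ∑ w ∈ W, #((H.voronoiCell W w).erase w) := by
        simp [card_erase_of_mem self_mem_voronoiCell]
    _ = #(W.biUnion fun w => (H.voronoiCell W w).erase w) := (card_biUnion hdisj).symm
    _ ≤ #(univ \ W) := card_le_card fun x hx => by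
        obtain ⟨w, -, hx⟩ := mem_biUnion.1 hx
        exact mem_sdiff.2 ⟨mem_univ x, fun hxW =>
          ne_of_mem_erase hx (eq_of_mem_voronoiCell_of_mem (mem_of_mem_erase hx) hxW)⟩
    _ = Fintype.card V - #W := by rw [card_sdiff_of_subset (subset_univ W), card_univ]

end VoronoiCell

end SimpleGraph

namespace ZMod

variable {L : ℕ}

/-- Residue `t` stands for the edge from `t` to `t + 1` of the cycle `ZMod L`; `arc x σ` is the set
of edges of the walk of length `σ` starting at `x`. -/
def arc (x : ZMod L) (σ : ℕ) : Finset (ZMod L) := (range σ).image fun t : ℕ => x + (t : ZMod L)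

theorem mem_arc {x j : ZMod L} {σ : ℕ} : j ∈ arc x σ ↔ ∃ t < σ, x + (t : ZMod L) = j := by
  simp [arc]

theorem card_arc_le (x : ZMod L) (σ : ℕ) : #(arc x σ) ≤ σ :=
  card_image_le.trans (card_range σ).le

theorem arc_mono (x : ZMod L) {σ τ : ℕ} (h : σ ≤ τ) : arc x σ ⊆ arc x τ :=
  image_subset_image (range_subset_range.2 h)

theorem arc_subset_arc_of_add_eq {x y : ZMod L} {σ τ : ℕ}
    (h : x + (σ : ZMod L) = y + (τ : ZMod L)) (hστ : σ ≤ τ) : arc x σ ⊆ arc y τ := by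
  intro j hj
  obtain ⟨t, ht, rfl⟩ := mem_arc.1 hj
  refine mem_arc.2 ⟨τ - σ + t, by omega, ?_⟩
  push_cast [Nat.cast_sub hστ]
  linear_combination -h

theorem notMem_arc_of_mem_arc {j x : ZMod L} {σ : ℕ} (hσ : σ ≤ L) (hj : j ∈ arc x σ) :
    j ∉ arc (x + (σ : ZMod L)) (L - σ) := by
  obtain ⟨t, ht, rfl⟩ := mem_arc.1 hj
  rintro hj'
  obtain ⟨t', ht', h⟩ := mem_arc.1 hj'
  have hcast : ((σ + t' : ℕ) : ZMod L) = t := by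
    push_cast
    linear_combination h
  have := congrArg val hcast
  rw [val_cast_of_lt (by omega), val_cast_of_lt (by omega)] at this
  omega

def IsArcCover (F : Finset (ZMod L × ℕ)) : Prop := ∀ j, ∃ q ∈ F, j ∈ arc q.1 q.2

theorem IsArcCover.exists_subset_injOn {F₀ : Finset (ZMod L × ℕ)} (hF₀ : IsArcCover F₀) :
    ∃ F ⊆ F₀, IsArcCover F ∧ Set.InjOn Prod.fst (F : Set (ZMod L × ℕ)) ∧
      Set.InjOn (fun q => q.1 + (q.2 : ZMod L)) (F : Set (ZMod L × ℕ)) := by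
  classical
  -- In a cover of minimal size no arc lies inside another one, and two arcs with the same
  -- initial or the same final point are nested.
  obtain ⟨F, hF, hmin⟩ := (F₀.powerset.filter IsArcCover).exists_min_image Finset.card
    ⟨F₀, mem_filter.2 ⟨mem_powerset_self _, hF₀⟩⟩
  rw [mem_filter, mem_powerset] at hF
  have hnested : ∀ q ∈ F, ∀ q' ∈ F, q ≠ q' → ¬ arc q.1 q.2 ⊆ arc q'.1 q'.2 := by
    intro q hq q' hq' hne hsub
    have hcov : IsArcCover (F.erase q) := fun j => by
      obtain ⟨r, hr, hj⟩ := hF.2 j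
      by_cases hrq : r = q
      · exact ⟨q', mem_erase.2 ⟨hne.symm, hq'⟩, hsub (hrq ▸ hj)⟩
      · exact ⟨r, mem_erase.2 ⟨hrq, hr⟩, hj⟩
    have := hmin _ (mem_filter.2 ⟨mem_powerset.2 ((erase_subset _ _).trans hF.1), hcov⟩)
    rw [card_erase_of_mem hq] at this
    have := card_pos.2 ⟨q, hq⟩
    omega
  refine ⟨F, hF.1, hF.2, fun q hq q' hq' h => ?_, fun q hq q' hq' h => ?_⟩ <;> by_contra hne
  · rcases le_total q.2 q'.2 with hle | hle
    · exact hnested q hq q' hq' hne (h ▸ arc_mono _ hle)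
    · exact hnested q' hq' q hq (Ne.symm hne) (h ▸ arc_mono _ hle)
  · rcases le_total q.2 q'.2 with hle | hle
    · exact hnested q hq q' hq' hne (arc_subset_arc_of_add_eq h hle)
    · exact hnested q' hq' q hq (Ne.symm hne) (arc_subset_arc_of_add_eq h.symm hle)

variable [NeZero L]

theorem mem_arc_or_mem_arc (j x : ZMod L) {σ : ℕ} (hσ : σ ≤ L) :
    j ∈ arc x σ ∨ j ∈ arc (x + (σ : ZMod L)) (L - σ) := by
  have hval := (j - x).val_lt
  have hx : x + ((j - x).val : ZMod L) = j := by rw [natCast_zmod_val]; ring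
  by_cases h : (j - x).val < σ
  · exact .inl (mem_arc.2 ⟨_, h, hx⟩)
  · refine .inr (mem_arc.2 ⟨(j - x).val - σ, by omega, ?_⟩)
    rw [add_assoc, ← Nat.cast_add, Nat.add_sub_cancel' (by omega), hx]

theorem IsArcCover.length_le_sum {F : Finset (ZMod L × ℕ)} (hF : IsArcCover F) :
    L ≤ ∑ q ∈ F, q.2 := calc
  L = #(univ : Finset (ZMod L)) := (ZMod.card L).symm
  _ ≤ #(F.biUnion fun q => arc q.1 q.2) := card_le_card fun j _ => mem_biUnion.2 (hF j)
  _ ≤ ∑ q ∈ F, #(arc q.1 q.2) := card_biUnion_le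
  _ ≤ ∑ q ∈ F, q.2 := sum_le_sum fun _ _ => card_arc_le _ _

theorem exists_forall_mem_arc_lt (R : ZMod L → ℕ) (c : ℕ) (h : 2 * ∑ x, R x + 2 ≤ L + 2 * c) :
    ∃ j, ∀ x σ, σ < L → j ∈ arc x σ → R x + R (x + (σ : ZMod L)) < σ + c := by
  classical
  by_contra! hcover
  set heavy : Finset (ZMod L × ℕ) :=
    (univ ×ˢ range L).filter fun q => q.2 + c ≤ R q.1 + R (q.1 + (q.2 : ZMod L))
  have hheavy : IsArcCover heavy := fun j => by
    obtain ⟨x, σ, hσ, hj, hxσ⟩ := hcover j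
    exact ⟨(x, σ), by simp [heavy, hσ, hxσ], hj⟩
  obtain ⟨F, hFheavy, hF, hfst, hlast⟩ := hheavy.exists_subset_injOn
  have hsum_le {g : ZMod L × ℕ → ZMod L} (hg : Set.InjOn g (F : Set (ZMod L × ℕ))) :
      ∑ q ∈ F, R (g q) ≤ ∑ x, R x :=
    (sum_image hg).symm.le.trans (sum_le_sum_of_subset (subset_univ _))
  have hweight : ∑ q ∈ F, (q.2 + c) ≤ 2 * ∑ x, R x := calc
    ∑ q ∈ F, (q.2 + c) ≤ ∑ q ∈ F, (R q.1 + R (q.1 + (q.2 : ZMod L))) :=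
      sum_le_sum fun q hq => (mem_filter.1 (hFheavy hq)).2
    _ = ∑ q ∈ F, R q.1 + ∑ q ∈ F, R (q.1 + (q.2 : ZMod L)) := sum_add_distrib
    _ ≤ 2 * ∑ x, R x := by linarith [hsum_le hfst, hsum_le hlast]
  have hlen := hF.length_le_sum
  have htwo : 2 ≤ #F := by
    by_contra! hF2
    obtain ⟨q, hq, -⟩ := hF 0
    obtain ⟨q', rfl⟩ := card_eq_one.1 (le_antisymm (by omega) (card_pos.2 ⟨q, hq⟩))
    have := mem_range.1 (mem_product.1 (mem_filter.1 (hFheavy (mem_singleton_self q'))).1).2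
    rw [sum_singleton] at hlen
    omega
  rw [sum_add_distrib, sum_const, smul_eq_mul] at hweight
  have := Nat.mul_le_mul_right c htwo
  omega

end ZMod

namespace SimpleGraph

variable {V : Type*} {H : SimpleGraph V}

namespace Walk

variable {v : V} (c : H.Walk v v) [NeZero c.length]

theorem getVert_val_add_one (x : ZMod c.length) :
    c.getVert (x + 1).val = c.getVert (x.val + 1) := by
  rw [ZMod.val_add, ZMod.val_one_eq_one_mod, Nat.add_mod_mod]
  rcases (by have := x.val_lt; omega : x.val + 1 < c.length ∨ x.val + 1 = c.length) with h | h
  · rw [Nat.mod_eq_of_lt h]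
  · rw [h, Nat.mod_self, getVert_zero, getVert_length]

theorem adj_getVert_val_add_one (x : ZMod c.length) :
    H.Adj (c.getVert x.val) (c.getVert (x + 1).val) :=
  c.getVert_val_add_one x ▸ c.adj_getVert_succ x.val_lt

theorem mk_getVert_val_mem_edges (x : ZMod c.length) :
    s(c.getVert x.val, c.getVert (x + 1).val) ∈ c.edges :=
  c.mk_mem_edges_iff_exists.2 ⟨x.val, x.val_lt, by rw [getVert_val_add_one]⟩

variable {c} in
theorem IsCycle.injective_getVert_val (hc : c.IsCycle) :
    Injective fun x : ZMod c.length => c.getVert x.val := fun x y h =>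
  ZMod.val_injective _ <| hc.getVert_injOn' (by have := x.val_lt; simp; omega)
    (by have := y.val_lt; simp; omega) h

end Walk

section CyclicSequence

variable {L : ℕ} {φ : ZMod L → V}

theorem mk_apply_add_one_ne_of_ne (hφ : Injective φ) (hL : 3 ≤ L) {x j : ZMod L} (hxj : x ≠ j) :
    s(φ x, φ (x + 1)) ≠ s(φ j, φ (j + 1)) := by
  intro h
  rcases Sym2.eq_iff.1 h with ⟨h₁, -⟩ | ⟨h₁, h₂⟩
  · exact hxj (hφ h₁)
  · have h₁ := hφ h₁
    have h₂ := hφ h₂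
    have h2 : ((2 : ℕ) : ZMod L) = 0 := by
      push_cast
      linear_combination h₂ - h₁
    have := Nat.le_of_dvd two_pos ((ZMod.natCast_eq_zero_iff 2 L).1 h2)
    omega

theorem edist_deleteEdges_le_of_notMem_arc (hφ : Injective φ)
    (hadj : ∀ x, H.Adj (φ x) (φ (x + 1))) (hL : 3 ≤ L) {j x : ZMod L} {σ : ℕ}
    (hj : j ∉ ZMod.arc x σ) :
    (H.deleteEdges {s(φ j, φ (j + 1))}).edist (φ x) (φ (x + (σ : ZMod L))) ≤ σ := by
  induction σ with
  | zero => simp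
  | succ σ ih =>
    have hσ : x + (σ : ZMod L) ≠ j := fun h => hj (ZMod.mem_arc.2 ⟨σ, by omega, h⟩)
    have hstep : (H.deleteEdges {s(φ j, φ (j + 1))}).Adj (φ (x + (σ : ZMod L)))
        (φ (x + ((σ + 1 : ℕ) : ZMod L))) := by
      rw [deleteEdges_adj, Nat.cast_succ, ← add_assoc, Set.mem_singleton_iff]
      exact ⟨hadj _, mk_apply_add_one_ne_of_ne hφ hL hσ⟩
    calc _ ≤ (H.deleteEdges {s(φ j, φ (j + 1))}).edist (φ x) (φ (x + (σ : ZMod L))) +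
          (H.deleteEdges {s(φ j, φ (j + 1))}).edist (φ (x + (σ : ZMod L)))
            (φ (x + ((σ + 1 : ℕ) : ZMod L))) := SimpleGraph.edist_triangle
      _ ≤ σ + 1 := add_le_add (ih fun h => hj (ZMod.arc_mono _ σ.le_succ h))
          (edist_eq_one_iff_adj.2 hstep).le
      _ = (σ + 1 : ℕ) := by push_cast; rfl

end CyclicSequence

section CycleCut

variable [Fintype V] [LinearOrder V] {L : ℕ} [NeZero L] {φ : ZMod L → V} {R : ZMod L → ℕ}
  {c : ℕ} {j : ZMod L}

theorem sum_card_voronoiCell_image_sub_one_le (hφ : Injective φ) :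
    ∑ x, (#(H.voronoiCell (univ.image φ) (φ x)) - 1) ≤ Fintype.card V - L := by
  have := sum_card_voronoiCell_sub_one_le (H := H) (W := univ.image φ)
  rwa [sum_image hφ.injOn, card_image_of_injective _ hφ, card_univ, ZMod.card] at this

theorem edist_deleteEdges_le_of_notMem_arc_of_mem_voronoiCell (hφ : Injective φ)
    (hadj : ∀ x, H.Adj (φ x) (φ (x + 1))) (hL : 3 ≤ L)
    (hR : ∀ x, #(H.voronoiCell (univ.image φ) (φ x)) - 1 ≤ R x)
    (hj : ∀ x σ, σ < L → j ∈ ZMod.arc x σ → R x + R (x + (σ : ZMod L)) < σ + c)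
    {s : ZMod L} {σ : ℕ} (hσ : 0 < σ) (hσL : σ ≤ L) (hjs : j ∉ ZMod.arc s σ) {a b : V}
    (ha : a ∈ H.voronoiCell (univ.image φ) (φ s))
    (hb : b ∈ H.voronoiCell (univ.image φ) (φ (s + (σ : ZMod L)))) :
    (H.deleteEdges {s(φ j, φ (j + 1))}).edist a b ≤ (L - 1 + c : ℕ) := by
  have hφW (x : ZMod L) : φ x ∈ univ.image φ := mem_image_of_mem φ (mem_univ x)
  have hcell {x : ZMod L} {y : V} (hy : y ∈ H.voronoiCell (univ.image φ) (φ x)) :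
      (H.deleteEdges {s(φ j, φ (j + 1))}).edist y (φ x) ≤ R x :=
    (edist_deleteEdges_le_of_mem_voronoiCell (hφW j) (hφW (j + 1)) (hadj j).ne hy
      self_mem_voronoiCell).trans (by exact_mod_cast hR x)
  have hback : s + (σ : ZMod L) + ((L - σ : ℕ) : ZMod L) = s := by
    rw [add_assoc, ← Nat.cast_add, Nat.add_sub_cancel' hσL, ZMod.natCast_self, add_zero]
  have hlight := hj _ (L - σ) (by omega)
    ((ZMod.mem_arc_or_mem_arc j s hσL).resolve_left hjs)
  rw [hback] at hlight
  calc _ ≤ (H.deleteEdges {s(φ j, φ (j + 1))}).edist a (φ s) +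
        (H.deleteEdges {s(φ j, φ (j + 1))}).edist (φ s) (φ (s + (σ : ZMod L))) +
        (H.deleteEdges {s(φ j, φ (j + 1))}).edist (φ (s + (σ : ZMod L))) b :=
      SimpleGraph.edist_triangle.trans (add_le_add SimpleGraph.edist_triangle le_rfl)
    _ ≤ R s + σ + R (s + (σ : ZMod L)) := by
      gcongr
      · exact hcell ha
      · exact edist_deleteEdges_le_of_notMem_arc hφ hadj hL hjs
      · exact edist_comm.le.trans (hcell hb)
    _ ≤ (L - 1 + c : ℕ) := by exact_mod_cast (by omega)

theorem edist_deleteEdges_le_of_mem_voronoiCell_of_ne (hφ : Injective φ)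
    (hadj : ∀ x, H.Adj (φ x) (φ (x + 1))) (hL : 3 ≤ L)
    (hR : ∀ x, #(H.voronoiCell (univ.image φ) (φ x)) - 1 ≤ R x)
    (hj : ∀ x σ, σ < L → j ∈ ZMod.arc x σ → R x + R (x + (σ : ZMod L)) < σ + c)
    {x y : ZMod L} (hxy : x ≠ y) {a b : V} (ha : a ∈ H.voronoiCell (univ.image φ) (φ x))
    (hb : b ∈ H.voronoiCell (univ.image φ) (φ y)) :
    (H.deleteEdges {s(φ j, φ (j + 1))}).edist a b ≤ (L - 1 + c : ℕ) := by
  set δ := (y - x).val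
  have hδL : δ < L := (y - x).val_lt
  have hy : x + (δ : ZMod L) = y := by rw [ZMod.natCast_zmod_val]; ring
  have hδ : 0 < δ := Nat.pos_of_ne_zero fun h => hxy (by rw [← hy, h, Nat.cast_zero, add_zero])
  have hx : y + ((L - δ : ℕ) : ZMod L) = x := by
    rw [← hy, add_assoc, ← Nat.cast_add, Nat.add_sub_cancel' hδL.le, ZMod.natCast_self, add_zero]
  rcases ZMod.mem_arc_or_mem_arc j x hδL.le with hjx | hjy
  · rw [edist_comm]
    refine edist_deleteEdges_le_of_notMem_arc_of_mem_voronoiCell hφ hadj hL hR hj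
      (by omega) (by omega) ?_ hb (hx ▸ ha)
    simpa [hy] using ZMod.notMem_arc_of_mem_arc hδL.le hjx
  · refine edist_deleteEdges_le_of_notMem_arc_of_mem_voronoiCell hφ hadj hL hR hj
      hδ hδL.le ?_ ha (hy ▸ hb)
    have := ZMod.notMem_arc_of_mem_arc (by omega) hjy
    rwa [hy, hx, Nat.sub_sub_self hδL.le] at this

theorem edist_deleteEdges_le_of_reachable (hφ : Injective φ)
    (hadj : ∀ x, H.Adj (φ x) (φ (x + 1))) (hL : 3 ≤ L)
    (hR : ∀ x, #(H.voronoiCell (univ.image φ) (φ x)) - 1 ≤ R x)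
    (hj : ∀ x σ, σ < L → j ∈ ZMod.arc x σ → R x + R (x + (σ : ZMod L)) < σ + c)
    (hV : Fintype.card V - L ≤ L - 1 + c) {a b : V} (hab : H.Reachable a b) :
    (H.deleteEdges {s(φ j, φ (j + 1))}).edist a b ≤ (L - 1 + c : ℕ) := by
  have hφW (x : ZMod L) : φ x ∈ univ.image φ := mem_image_of_mem φ (mem_univ x)
  by_cases ha : ∃ w ∈ univ.image φ, H.Reachable a w
  · obtain ⟨w₀, hw₀, haw₀⟩ := ha
    obtain ⟨_, hwa, ha⟩ := exists_mem_voronoiCell hw₀ haw₀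
    obtain ⟨_, hwb, hb⟩ := exists_mem_voronoiCell hw₀ (hab.symm.trans haw₀)
    obtain ⟨x, -, rfl⟩ := mem_image.1 hwa
    obtain ⟨y, -, rfl⟩ := mem_image.1 hwb
    obtain rfl | hxy := eq_or_ne x y
    · have hcell := (single_le_sum (fun _ _ => Nat.zero_le _) (mem_univ x)).trans
        (sum_card_voronoiCell_image_sub_one_le (H := H) hφ)
      refine (edist_deleteEdges_le_of_mem_voronoiCell (hφW j) (hφW (j + 1)) (hadj j).ne ha
        hb).trans ?_
      exact_mod_cast hcell.trans hV
    · exact edist_deleteEdges_le_of_mem_voronoiCell_of_ne hφ hadj hL hR hj hxy ha hb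
  · push Not at ha
    refine (edist_deleteEdges_le_of_forall_not_reachable (hφW j) hab ha).trans ?_
    rw [card_image_of_injective _ hφ, card_univ, ZMod.card]
    exact_mod_cast (by omega)

end CycleCut

end SimpleGraph

open SimpleGraph

theorem exists_removable_cycle_edge_general {n : ℕ} (G H : SimpleGraph (Fin n)) (k : ℕ)
    (hk : 0 < k) (hH : IsKSpanner G H k) (v : Fin n) (c : H.Walk v v)
    (hc : c.IsCycle)
    (hlb : 2 * ((n : ℤ) - k) ≤ (c.length : ℤ)) (hub : c.length ≤ k + 1) :
    ∃ e ∈ c.edges, IsKSpanner G (H.deleteEdges {e}) k := by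
  have hL := hc.three_le_length
  have : NeZero c.length := ⟨by omega⟩
  set φ : ZMod c.length → Fin n := fun x => c.getVert x.val
  have hφ : Injective φ := hc.injective_getVert_val
  set R : ZMod c.length → ℕ := fun x => #(H.voronoiCell (univ.image φ) (φ x)) - 1
  have hR : ∑ x, R x ≤ n - c.length := by
    simpa using sum_card_voronoiCell_image_sub_one_le (H := H) hφ
  obtain ⟨j, hj⟩ := ZMod.exists_forall_mem_arc_lt R (k + 1 - c.length) (by omega)
  refine ⟨s(φ j, φ (j + 1)), c.mk_getVert_val_mem_edges j,
    hH.of_reachable hk.ne' ((deleteEdges_le _).trans hH.1) fun a b hab => ?_⟩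
  refine (edist_deleteEdges_le_of_reachable hφ c.adj_getVert_val_add_one hL (fun _ => le_rfl) hj
    (by rw [Fintype.card_fin]; omega) hab).trans ?_
  exact_mod_cast (by omega)

/-- if `H` is a `k`-spanner of an `n`-vertex graph `G`, and `c` is a
cycle of `H` whose length `L` equals the girth of `H` with `2(n-k) ≤ L ≤ k+1`,
then some edge `e` of `c` can be removed with `H` remaining a `k`-spanner. -/
theorem exists_removable_cycle_edge {n : ℕ} (G H : SimpleGraph (Fin n)) (k : ℕ)
    (hk : 0 < k) (hH : IsKSpanner G H k) (v : Fin n) (c : H.Walk v v)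
    (hc : c.IsCycle) (hgirth : (c.length : ℕ∞) = H.egirth)
    (hlb : 2 * ((n : ℤ) - k) ≤ (c.length : ℤ)) (hub : c.length ≤ k + 1) :
    ∃ e ∈ c.edges, IsKSpanner G (H.deleteEdges {e}) k :=
  exists_removable_cycle_edge_general G H k hk hH v c hc hlb hub
end

section
/- Let G be a finite simple undirected graph, k a positive integer, H a k-spanner of G, and let C be a cycle of H whose length equals the girth of H. Suppose e is an edge of C and (s,t) is a pair of vertices with dist_H(s,t) ≤ k such that removing e from H makes the distance between s and t exceed k. Then any shortest path p between s and t in H that maximizes the number of edges shared with C (among all shortest s–t paths in H) has the property that the set of edges of p lying on C is nonempty, contains e, and forms a consecutive segment (a subpath) of both p and C. -/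
/-! Deleting `e` destroys every short `s`–`t` connection, so every shortest `s`–`t` path `p`
uses `e`. Cut `p` at its first and last edges on `c`: the middle piece `q` is a shortest path
between two vertices `u ≠ w` of `c`, which split `c` into two arcs `A ∋ e` and `B`. If `q ≠ A`,
then `q ∪ A` contains a cycle with fewer than `|q| + |A| ≤ |B| + |A| = |c|` edges (the shared
edge `e` is counted twice), contradicting the minimality of `c`. Hence `q = A` is a segment of
`c`, and by the choice of the cut no other edge of `p` lies on `c`. -/

theorem List.IsRotated.isInfix_append_self {α : Type*} {l l' : List α} (h : l' ~r l) :
    l' <:+: l ++ l := by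
  obtain ⟨n, rfl⟩ := h.symm
  rw [List.rotate_eq_drop_append_take_mod]
  refine ⟨l.take (n % l.length), l.drop (n % l.length), ?_⟩
  conv_rhs => rw [← List.take_append_drop (n % l.length) l]
  simp only [List.append_assoc]

namespace SimpleGraph.Walk

variable {V : Type*} {G : SimpleGraph V} {u v w : V}

theorem exists_eq_append_cons_of_exists_mem_edges (P : Sym2 V → Prop) :
    ∀ {u v : V} (p : G.Walk u v), (∃ f ∈ p.edges, P f) →
      ∃ (x y : V) (p₁ : G.Walk u x) (h : G.Adj x y) (p₂ : G.Walk y v),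
        p = p₁.append (cons h p₂) ∧ (∀ f ∈ p₁.edges, ¬ P f) ∧ P s(x, y)
  | _, _, nil, ⟨f, hf, _⟩ => by simp at hf
  | u, _, cons (v := x) h p, ⟨f, hf, hPf⟩ => by
    by_cases hP : P s(u, x)
    · exact ⟨_, _, nil, h, p, rfl, by simp, hP⟩
    · have hf' : f ∈ p.edges := by
        rcases List.mem_cons.mp hf with rfl | hf
        exacts [absurd hPf hP, hf]
      obtain ⟨x, y, p₁, h', p₂, rfl, hp₁, hPxy⟩ :=
        exists_eq_append_cons_of_exists_mem_edges P p ⟨f, hf', hPf⟩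
      refine ⟨x, y, cons h p₁, h', p₂, rfl, ?_, hPxy⟩
      simpa [hP] using hp₁

theorem exists_eq_append_append_of_exists_mem_edges (P : Sym2 V → Prop) (p : G.Walk u v)
    (hP : ∃ f ∈ p.edges, P f) :
    ∃ (x y : V) (p₁ : G.Walk u x) (q : G.Walk x y) (p₂ : G.Walk y v),
      p = (p₁.append q).append p₂ ∧ (∀ f ∈ p₁.edges, ¬ P f) ∧ (∀ f ∈ p₂.edges, ¬ P f) ∧
      (∃ x', P s(x, x')) ∧ (∃ y', P s(y, y')) := by
  obtain ⟨x, x', p₁, h, r, rfl, hp₁, hPx⟩ := exists_eq_append_cons_of_exists_mem_edges P p hP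
  obtain ⟨y, y', p₂, h', r', hr, hp₂, hPy⟩ :=
    exists_eq_append_cons_of_exists_mem_edges P (cons h r).reverse ⟨s(x, x'), by simp, hPx⟩
  refine ⟨x, y, p₁, (cons h' r').reverse, p₂.reverse, ?_, hp₁, by simpa using hp₂, ⟨x', hPx⟩,
    ⟨y', hPy⟩⟩
  rw [← append_assoc, ← reverse_append, ← hr, reverse_reverse]

theorem IsCycle.exists_isPath_arcs {c : G.Walk v v} (hc : c.IsCycle) (hu : u ∈ c.support)
    (hw : w ∈ c.support) (huw : u ≠ w) :
    ∃ A B : G.Walk u w, A.IsPath ∧ B.IsPath ∧ A.length + B.length = c.length ∧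
      (∀ f ∈ c.edges, f ∈ A.edges ∨ f ∈ B.edges) ∧
      A.edges <:+: c.edges ++ c.edges ∧ B.edges.reverse <:+: c.edges ++ c.edges := by
  classical
  set c' := c.rotate u hu
  have hc' : c'.IsCycle := hc.rotate hu
  have hw' : w ∈ c'.support := (c.mem_support_rotate_iff u hu).mpr hw
  have hsplit := c'.take_spec hw'
  have hedges : c'.edges = (c'.takeUntil w hw').edges ++ (c'.dropUntil w hw').edges := by
    rw [← edges_append, hsplit]
  have hinfix : c'.edges <:+: c.edges ++ c.edges := (c.rotate_edges u hu).isInfix_append_self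
  refine ⟨c'.takeUntil w hw', (c'.dropUntil w hw').reverse, hc'.isPath_takeUntil hw',
    (IsCycle.isPath_of_append_right (not_nil_of_ne huw) (hsplit.symm ▸ hc')).reverse,
    ?_, ?_, ?_, ?_⟩
  · rw [length_reverse, ← length_append, hsplit, length_rotate]
  · intro f hf
    have : f ∈ c'.edges := (c.rotate_edges u hu).mem_iff.mpr hf
    simpa [hedges] using this
  · exact (List.prefix_append _ _).isInfix.trans (hedges ▸ hinfix)
  · rw [edges_reverse, List.reverse_reverse]
    exact (List.suffix_append _ _).isInfix.trans (hedges ▸ hinfix)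

theorem exists_isCycle_of_isPath_of_edges_ne {p q : G.Walk u v} (hp : p.IsPath) (hq : q.IsPath)
    (hne : p.edges ≠ q.edges) :
    ∃ (x : V) (c : G.Walk x x), c.IsCycle ∧ ∀ f ∈ c.edges, f ∈ p.edges ∨ f ∈ q.edges := by
  set K := fromEdgeSet {f | f ∈ p.edges ∨ f ∈ q.edges}
  have hK : ∀ r : G.Walk u v, (∀ f ∈ r.edges, f ∈ p.edges ∨ f ∈ q.edges) →
      ∀ f ∈ r.edges, f ∈ K.edgeSet := fun r hr f hf => by
    rw [edgeSet_fromEdgeSet]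
    exact ⟨hr f hf, G.not_isDiag_of_mem_edgeSet (r.edges_subset_edgeSet hf)⟩
  have hpK := hK p fun f hf => .inl hf
  have hqK := hK q fun f hf => .inr hf
  have hcyc : ¬ K.IsAcyclic := fun hac => hne <| by
    simpa using congrArg (fun r : K.Path u v => r.1.edges)
      ((hac.subsingleton_path u v).elim ⟨p.transfer K hpK, hp.transfer hpK⟩
        ⟨q.transfer K hqK, hq.transfer hqK⟩)
  simp only [IsAcyclic, not_forall, not_not] at hcyc
  obtain ⟨x, c, hc⟩ := hcyc
  have hcK : ∀ f ∈ c.edges, f ∈ p.edges ∨ f ∈ q.edges := fun f hf =>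
    (edgeSet_fromEdgeSet _ ▸ c.edges_subset_edgeSet hf).1
  have hcG : ∀ f ∈ c.edges, f ∈ G.edgeSet := fun f hf =>
    (hcK f hf).elim (p.edges_subset_edgeSet ·) (q.edges_subset_edgeSet ·)
  exact ⟨x, c.transfer G hcG, hc.transfer hcG, by simpa using hcK⟩

theorem egirth_lt_length_add_length {p q : G.Walk u v} {e : Sym2 V} (hp : p.IsPath)
    (hq : q.IsPath) (hne : p.edges ≠ q.edges) (hep : e ∈ p.edges) (heq : e ∈ q.edges) :
    G.egirth < ↑(p.length + q.length) := by
  classical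
  obtain ⟨x, c, hc, hcpq⟩ := exists_isCycle_of_isPath_of_edges_ne hp hq hne
  have hsub : c.edges.toFinset ⊆ (p.edges ++ q.edges).toFinset := by
    intro f hf
    simpa using hcpq f (List.mem_toFinset.mp hf)
  have hdup : ¬ (p.edges ++ q.edges).Nodup := fun h =>
    List.disjoint_of_nodup_append h hep heq
  have hlt : (p.edges ++ q.edges).toFinset.card < (p.edges ++ q.edges).length :=
    (List.toFinset_card_le (l := p.edges ++ q.edges)).lt_of_ne
      fun h => hdup (Multiset.toFinset_card_eq_card_iff_nodup.mp h)
  calc G.egirth ≤ c.length := egirth_le_length hc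
    _ < ↑(p.length + q.length) := by
      have := Finset.card_le_card hsub
      rw [List.toFinset_card_of_nodup hc.edges_nodup, length_edges] at this
      simp only [List.length_append, length_edges] at hlt
      exact_mod_cast this.trans_lt hlt

theorem IsCycle.edges_isInfix_of_length_eq_dist {c : G.Walk v v} (hc : c.IsCycle)
    (hgirth : (c.length : ℕ∞) = G.egirth) {q : G.Walk u w} (hq : q.length = G.dist u w)
    (hu : u ∈ c.support) (hw : w ∈ c.support) {e : Sym2 V} (heq : e ∈ q.edges)
    (hec : e ∈ c.edges) :
    q.edges <:+: c.edges ++ c.edges ∨ q.edges.reverse <:+: c.edges ++ c.edges := by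
  have hqpath : q.IsPath := q.isPath_of_length_eq_dist hq
  have huw : u ≠ w := by
    rintro rfl
    simp [(isPath_iff_nil.mp hqpath).eq_nil] at heq
  obtain ⟨A, B, hA, hB, hAB, hcAB, hAc, hBc⟩ := hc.exists_isPath_arcs hu hw huw
  have eq_arc : ∀ X Y : G.Walk u w, X.IsPath → X.length + Y.length = c.length → e ∈ X.edges →
      q.edges = X.edges := by
    intro X Y hX hXY heX
    by_contra hne
    have hlt := egirth_lt_length_add_length hqpath hX hne heq heX
    have hqY : q.length ≤ Y.length := hq ▸ dist_le Y
    rw [← hgirth, Nat.cast_lt] at hlt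
    omega
  rcases hcAB e hec with heA | heB
  · exact .inl (eq_arc A B hA hAB heA ▸ hAc)
  · exact .inr (eq_arc B A hB (by omega) heB ▸ hBc)

theorem mem_edges_of_length_lt_edist_deleteEdges (p : G.Walk u v) {e : Sym2 V}
    (h : (p.length : ℕ∞) < (G.deleteEdges {e}).edist u v) : e ∈ p.edges := by
  by_contra he
  have := (p.toDeleteEdge e he).edist_le
  simp only [length_transfer] at this
  exact h.not_ge this

end SimpleGraph.Walk

open SimpleGraph Walk

theorem shared_cycle_edges_consecutive_general {V : Type*}
    (H : SimpleGraph V) (k : ℕ)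
    (v : V) (c : H.Walk v v) (hc : c.IsCycle) (hgirth : (c.length : ℕ∞) = H.egirth)
    (e : Sym2 V) (he : e ∈ c.edges) (s t : V)
    (hst : H.edist s t ≤ (k : ℕ∞))
    (hcut : (k : ℕ∞) < (H.deleteEdges {e}).edist s t)
    (p : H.Walk s t) (hlen : (p.length : ℕ∞) = H.edist s t) :
    ∃ l : List (Sym2 V), l <:+: p.edges ∧
      (l <:+: (c.edges ++ c.edges) ∨ l.reverse <:+: (c.edges ++ c.edges)) ∧
      e ∈ l ∧ ∀ f : Sym2 V, f ∈ l ↔ (f ∈ p.edges ∧ f ∈ c.edges) := by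
  have hep : e ∈ p.edges :=
    p.mem_edges_of_length_lt_edist_deleteEdges ((hlen ▸ hst).trans_lt hcut)
  obtain ⟨u, w, p₁, q, p₂, rfl, hp₁, hp₂, ⟨u', huc⟩, ⟨w', hwc⟩⟩ :=
    p.exists_eq_append_append_of_exists_mem_edges (· ∈ c.edges) ⟨e, hep, he⟩
  have hedges : ((p₁.append q).append p₂).edges = p₁.edges ++ q.edges ++ p₂.edges := by
    simp only [edges_append]
  have hq : q.length = H.dist u w :=
    length_eq_dist_of_subwalk (by simp only [SimpleGraph.dist, ← hlen, ENat.toNat_natCast])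
      ⟨p₁, p₂, rfl⟩
  have hcq : ∀ f ∈ c.edges, f ∈ ((p₁.append q).append p₂).edges → f ∈ q.edges := by
    intro f hfc hfp
    rw [hedges, List.mem_append, List.mem_append] at hfp
    exact ((hfp.resolve_right (hp₂ f · hfc)).resolve_left (hp₁ f · hfc))
  have heq : e ∈ q.edges := hcq e he hep
  have harc := hc.edges_isInfix_of_length_eq_dist hgirth hq (c.fst_mem_support_of_mem_edges huc)
    (c.fst_mem_support_of_mem_edges hwc) heq he
  have hqc : ∀ f ∈ q.edges, f ∈ c.edges := fun f hf => by
    rcases harc with h | h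
    · simpa using h.subset hf
    · simpa using h.subset (List.mem_reverse.mpr hf)
  refine ⟨q.edges, ⟨p₁.edges, p₂.edges, hedges.symm⟩, harc, heq, fun f => ⟨?_, ?_⟩⟩
  · intro hf
    exact ⟨hedges ▸ by simp [hf], hqc f hf⟩
  · exact fun ⟨hfp, hfc⟩ => hcq f hfc hfp

/-- let `c` be a shortest cycle of a `k`-spanner `H` of `G`, `e` an
edge of `c`, and `(s,t)` a pair with `dist_H(s,t) ≤ k` that is disconnected beyond
distance `k` by removing `e`. Then any shortest `s`–`t` path `p` maximizing the
number of edges shared with `c` shares with `c` a nonempty set of edges containing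
`e` which forms a consecutive segment of both `p` and `c` (consecutiveness in the
cycle `c` is expressed as being an infix of the doubled edge list of `c`, up to
reversal). -/
theorem shared_cycle_edges_consecutive {V : Type*} [Fintype V] [DecidableEq V]
    (G H : SimpleGraph V) (k : ℕ) (hk : 0 < k) (hH : IsKSpanner G H k)
    (v : V) (c : H.Walk v v) (hc : c.IsCycle) (hgirth : (c.length : ℕ∞) = H.egirth)
    (e : Sym2 V) (he : e ∈ c.edges) (s t : V)
    (hst : H.edist s t ≤ (k : ℕ∞))
    (hcut : (k : ℕ∞) < (H.deleteEdges {e}).edist s t)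
    (p : H.Walk s t) (hp : p.IsPath) (hlen : (p.length : ℕ∞) = H.edist s t)
    (hmax : ∀ q : H.Walk s t, q.IsPath → (q.length : ℕ∞) = H.edist s t →
      (q.edges.toFinset ∩ c.edges.toFinset).card ≤
        (p.edges.toFinset ∩ c.edges.toFinset).card) :
    ∃ l : List (Sym2 V), l <:+: p.edges ∧
      (l <:+: (c.edges ++ c.edges) ∨ l.reverse <:+: (c.edges ++ c.edges)) ∧
      e ∈ l ∧ ∀ f : Sym2 V, f ∈ l ↔ (f ∈ p.edges ∧ f ∈ c.edges) :=
  shared_cycle_edges_consecutive_general H k v c hc hgirth e he s t hst hcut p hlen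
end
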